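/- arXiv:1908.03588 — 10 statements merged into one kernel-verified Lean document; each statement's English description precedes it below -/
import Mathlib

section
/- Let H be a finite simple graph that is 2-connected, and suppose each edge of H is colored either red or blue in such a way that at least one edge is red and at least one edge is blue. Then H contains a simple cycle that contains at least one red edge and at least one blue edge. -/
/-!
If no vertex had two incident edges of different colours, colours would propagate along walks,
so in a connected graph all edges would share one colour. Hence some vertex `v` has a red edge
`vu` and a blue edge `vw`. Since `H - v` is connected, it contains a path from `u` to `w`, which
closes up through `v` into a cycle containing both edges.
-/

namespace SimpleGraph

variable {V α : Type*} {H : SimpleGraph V} (c : Sym2 V → α)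

theorem Walk.color_eq_of_mem_edges
    (hc : ∀ v u w, H.Adj v u → H.Adj v w → c s(v, u) = c s(v, w)) {x' x y : V}
    (hx : H.Adj x' x) (p : H.Walk x y) {e : Sym2 V} (he : e ∈ p.edges) : c e = c s(x', x) := by
  induction p generalizing x' with
  | nil => simp at he
  | @cons x z y h q ih =>
    have hxz : c s(x, z) = c s(x', x) := by
      rw [hc x z x' h hx.symm, Sym2.eq_swap]
    rcases List.mem_cons.mp he with rfl | he
    · exact hxz
    · rw [ih h he, hxz]

theorem exists_adj_adj_color_ne (hH : H.Preconnected) {e f : Sym2 V} (he : e ∈ H.edgeSet)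
    (hf : f ∈ H.edgeSet) (hef : c e ≠ c f) :
    ∃ v u w, H.Adj v u ∧ H.Adj v w ∧ c s(v, u) ≠ c s(v, w) := by
  by_contra! hc
  induction e using Sym2.inductionOn with | hf a b =>
  induction f using Sym2.inductionOn with | hf x y =>
  rw [mem_edgeSet] at he hf
  obtain ⟨q⟩ := hH b x
  have hxy : s(x, y) ∈ (q.concat hf).edges := by simp [Walk.edges_concat]
  exact hef (Walk.color_eq_of_mem_edges c hc he (q.concat hf) hxy).symm

theorem exists_isCycle_mem_edges_of_adj_adj {v u w : V}
    (hv : (H.induce ({v}ᶜ : Set V)).Preconnected) (hu : H.Adj v u) (hw : H.Adj v w)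
    (huw : u ≠ w) :
    ∃ p : H.Walk v v, p.IsCycle ∧ s(v, u) ∈ p.edges ∧ s(v, w) ∈ p.edges := by
  classical
  obtain ⟨q⟩ := hv ⟨u, hu.ne'⟩ ⟨w, hw.ne'⟩
  let ι := Embedding.induce (G := H) ({v}ᶜ : Set V)
  let p : H.Walk u w := q.toPath.val.map ι.toHom
  have hp : p.IsPath := q.toPath.prop.map ι.injective
  have hvp : v ∉ p.support := by
    rw [show p.support = _ from Walk.support_map _ _, List.mem_map]
    rintro ⟨⟨z, hz⟩, -, hzv⟩
    exact hz hzv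
  refine ⟨.cons hu (p.concat hw.symm), ?_, by simp, by simp [Walk.edges_concat]⟩
  refine (Walk.cons_isCycle_iff _ hu).mpr ⟨hp.concat hvp hw.symm, fun h ↦ ?_⟩
  rw [Walk.edges_concat, List.concat_eq_append, List.mem_append] at h
  rcases h with h | h
  · exact hvp (p.fst_mem_support_of_mem_edges h)
  · simp only [List.mem_singleton, Sym2.eq_iff] at h
    rcases h with ⟨-, rfl⟩ | ⟨-, rfl⟩
    · exact hu.ne' rfl
    · exact huw rfl

end SimpleGraph

open SimpleGraph in
theorem stmt_0_general {V : Type}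
    (H : SimpleGraph V)
    (hconn : H.Connected)
    (h2conn : ∀ v : V, (H.induce ({v}ᶜ : Set V)).Connected)
    (c : Sym2 V → Bool)
    (hred : ∃ e ∈ H.edgeSet, c e = true)
    (hblue : ∃ e ∈ H.edgeSet, c e = false) :
    ∃ (v : V) (p : H.Walk v v), p.IsCycle ∧
      (∃ e ∈ p.edges, c e = true) ∧ (∃ e ∈ p.edges, c e = false) := by
  obtain ⟨e, he, hce⟩ := hred
  obtain ⟨f, hf, hcf⟩ := hblue
  obtain ⟨v, u, w, hu, hw, hcuw⟩ :=
    exists_adj_adj_color_ne c hconn.preconnected he hf (by simp [hce, hcf])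
  have huw : u ≠ w := by rintro rfl; exact hcuw rfl
  obtain ⟨p, hp, hup, hwp⟩ :=
    exists_isCycle_mem_edges_of_adj_adj (h2conn v).preconnected hu hw huw
  have hcolor (b : Bool) : ∃ e ∈ p.edges, c e = b := by
    by_cases hb : c s(v, u) = b
    · exact ⟨_, hup, hb⟩
    · exact ⟨_, hwp, (Bool.eq_not_of_ne hcuw.symm).trans (Bool.eq_not_of_ne (Ne.symm hb)).symm⟩
  exact ⟨v, p, hp, hcolor true, hcolor false⟩

/-- Let `H` be a finite simple graph that is 2-connected (connected, and
remains connected after deleting any single vertex), and suppose each edge of `H` is colored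
red (`true`) or blue (`false`) such that at least one edge is red and at least one edge is
blue. Then `H` contains a simple cycle containing at least one red edge and at least one
blue edge. -/
theorem stmt_0 {V : Type} [Fintype V] [DecidableEq V]
    (H : SimpleGraph V)
    (hconn : H.Connected)
    (h2conn : ∀ v : V, (H.induce ({v}ᶜ : Set V)).Connected)
    (c : Sym2 V → Bool)
    (hred : ∃ e ∈ H.edgeSet, c e = true)
    (hblue : ∃ e ∈ H.edgeSet, c e = false) :
    ∃ (v : V) (p : H.Walk v v), p.IsCycle ∧
      (∃ e ∈ p.edges, c e = true) ∧ (∃ e ∈ p.edges, c e = false) :=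
  stmt_0_general H hconn h2conn c hred hblue
end

section
/- Let H be a finite simple graph that is 2-connected, and suppose each edge of H is colored either red or blue in such a way that every simple cycle of H is monochromatic (all edges of the cycle have the same color). Then for every vertex v of H, all edges incident to v have the same color. -/
/-! Given edges `va` and `vb` with `a ≠ b`, 2-connectivity yields an `a`–`b` path avoiding `v`;
closing it up through `v` gives a cycle containing both edges, which is therefore monochromatic. -/

namespace SimpleGraph

variable {V : Type*} {G : SimpleGraph V}

theorem Reachable.exists_isPath_of_induce {s : Set V} {a b : V} {ha : a ∈ s} {hb : b ∈ s}
    (h : (G.induce s).Reachable ⟨a, ha⟩ ⟨b, hb⟩) :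
    ∃ p : G.Walk a b, p.IsPath ∧ ∀ x ∈ p.support, x ∈ s := by
  classical
  obtain ⟨w⟩ := h
  let q : G.Walk a b := w.map (Embedding.induce s).toHom
  refine ⟨q.bypass, q.bypass_isPath, fun x hx => ?_⟩
  have hxq : x ∈ (w.map (Embedding.induce s).toHom).support := q.support_bypass_subset_support hx
  rw [Walk.support_map, List.mem_map] at hxq
  obtain ⟨⟨y, hy⟩, -, rfl⟩ := hxq
  exact hy

theorem Walk.IsPath.isCycle_cons_concat {v a b : V} {p : G.Walk a b} (hp : p.IsPath)
    (hv : v ∉ p.support) (hab : a ≠ b) (hva : G.Adj v a) (hbv : G.Adj b v) :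
    (Walk.cons hva (p.concat hbv)).IsCycle := by
  refine (Walk.cons_isCycle_iff _ _).mpr ⟨hp.concat hv hbv, fun he => ?_⟩
  rw [Walk.edges_concat, List.concat_eq_append, List.mem_append] at he
  rcases he with he | he
  · exact hv (p.fst_mem_support_of_mem_edges he)
  · rcases Sym2.eq_iff.mp (List.mem_singleton.mp he) with ⟨rfl, -⟩ | ⟨-, rfl⟩
    · exact hv p.end_mem_support
    · exact hab rfl

end SimpleGraph

open SimpleGraph in
theorem stmt_1_general {V : Type}
    (H : SimpleGraph V)
    (h2conn : ∀ v : V, (H.induce ({v}ᶜ : Set V)).Connected)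
    (c : Sym2 V → Bool)
    (hmono : ∀ (v : V) (p : H.Walk v v), p.IsCycle →
      ∀ e₁ ∈ p.edges, ∀ e₂ ∈ p.edges, c e₁ = c e₂) :
    ∀ (v : V), ∀ e₁ ∈ H.edgeSet, ∀ e₂ ∈ H.edgeSet,
      v ∈ e₁ → v ∈ e₂ → c e₁ = c e₂ := by
  intro v e₁ he₁ e₂ he₂ hv₁ hv₂
  obtain ⟨a, rfl⟩ := Sym2.mem_iff_exists.mp hv₁
  obtain ⟨b, rfl⟩ := Sym2.mem_iff_exists.mp hv₂
  rw [mem_edgeSet] at he₁ he₂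
  obtain rfl | hab := eq_or_ne a b
  · rfl
  obtain ⟨p, hp, hpv⟩ := ((h2conn v).preconnected
    ⟨a, Set.mem_compl_singleton_iff.mpr he₁.ne'⟩ ⟨b, Set.mem_compl_singleton_iff.mpr he₂.ne'⟩
    ).exists_isPath_of_induce
  have hv : v ∉ p.support := fun h => hpv v h rfl
  refine hmono v _ (hp.isCycle_cons_concat hv hab he₁ he₂.symm) _ ?_ _ ?_ <;> simp

/-- Let `H` be a finite simple graph that is 2-connected, and suppose each
edge of `H` is colored red (`true`) or blue (`false`) such that every simple cycle of `H` is
monochromatic. Then for every vertex `v`, all edges of `H` incident to `v` have the same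
color. -/
theorem stmt_1 {V : Type} [Fintype V] [DecidableEq V]
    (H : SimpleGraph V)
    (hconn : H.Connected)
    (h2conn : ∀ v : V, (H.induce ({v}ᶜ : Set V)).Connected)
    (c : Sym2 V → Bool)
    (hmono : ∀ (v : V) (p : H.Walk v v), p.IsCycle →
      ∀ e₁ ∈ p.edges, ∀ e₂ ∈ p.edges, c e₁ = c e₂) :
    ∀ (v : V), ∀ e₁ ∈ H.edgeSet, ∀ e₂ ∈ H.edgeSet,
      v ∈ e₁ → v ∈ e₂ → c e₁ = c e₂ :=
  stmt_1_general H h2conn c hmono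
end

section
/- Let H be a finite simple graph that is 2-connected, and let F be a set of edges of H that is nonempty and a proper subset of the edge set of H. Then there exist a simple cycle C in H and a vertex v lying on C such that exactly one of the two edges of C incident to v belongs to F. -/
/-!
Along a walk from an endpoint of an edge in `F` to an endpoint of an edge outside `F`, some
vertex `v` has neighbours `u`, `w` with `vu ∈ F` and `vw ∉ F`. By 2-connectivity `u` and `w` are
joined by a path avoiding `v`, and closing it up with the edges `wv` and `vu` gives the cycle.
-/

namespace SimpleGraph

variable {V : Type} {G : SimpleGraph V}

lemma Walk.exists_adj_mem_adj_not_mem {F : Set (Sym2 V)} :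
    ∀ {x y : V} (_ : G.Walk x y), (∃ a, G.Adj x a ∧ s(x, a) ∈ F) →
      (∃ b, G.Adj y b ∧ s(y, b) ∉ F) →
      ∃ v u w, G.Adj v u ∧ G.Adj v w ∧ s(v, u) ∈ F ∧ s(v, w) ∉ F
  | _, _, .nil, ⟨a, ha, haF⟩, ⟨b, hb, hbF⟩ => ⟨_, a, b, ha, hb, haF, hbF⟩
  | x, _, .cons (v := z) hxz p, ⟨a, ha, haF⟩, hb => by
    by_cases hzx : s(z, x) ∈ F
    · exact p.exists_adj_mem_adj_not_mem ⟨x, hxz.symm, hzx⟩ hb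
    · exact ⟨x, a, z, ha, hxz, haF, by rwa [Sym2.eq_swap]⟩

lemma Preconnected.exists_isPath_support_subset {s : Set V} (h : (G.induce s).Preconnected)
    {u w : V} (hu : u ∈ s) (hw : w ∈ s) :
    ∃ P : G.Walk u w, P.IsPath ∧ ∀ x ∈ P.support, x ∈ s := by
  obtain ⟨W, hW⟩ := h.exists_isPath ⟨u, hu⟩ ⟨w, hw⟩
  refine ⟨W.map (Embedding.induce (G := G) s).toHom,
    hW.map (Embedding.induce (G := G) s).injective, ?_⟩
  intro x hx
  obtain ⟨y, -, rfl⟩ := List.mem_map.mp <|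
    (W.support_map (Embedding.induce (G := G) s).toHom) ▸ hx
  exact y.2

lemma Walk.IsPath.cons_concat_isCycle {u v w : V} {P : G.Walk u w} (hP : P.IsPath)
    (hvP : v ∉ P.support) (hvu : G.Adj v u) (hwv : G.Adj w v) (huw : u ≠ w) :
    (Walk.cons hvu (P.concat hwv)).IsCycle := by
  refine (Walk.cons_isCycle_iff _ hvu).mpr ⟨hP.concat hvP hwv, ?_⟩
  rw [Walk.edges_concat, List.concat_eq_append, List.mem_append, List.mem_singleton]
  rintro (hP' | hvuw)
  · exact hvP (P.fst_mem_support_of_mem_edges hP')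
  · rcases Sym2.eq_iff.mp hvuw with ⟨-, huv⟩ | ⟨-, huw'⟩
    · exact hvu.ne huv.symm
    · exact huw huw'

end SimpleGraph

theorem stmt_2_general {V : Type}
    (H : SimpleGraph V)
    (hconn : H.Connected)
    (h2conn : ∀ v : V, (H.induce ({v}ᶜ : Set V)).Connected)
    (F : Set (Sym2 V)) (hFsub : F ⊆ H.edgeSet) (hFne : F.Nonempty)
    (hFproper : F ≠ H.edgeSet) :
    ∃ (u : V) (p : H.Walk u u), p.IsCycle ∧
      ∃ v ∈ p.support, ∃ e₁ e₂ : Sym2 V,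
        e₁ ∈ p.edges ∧ e₂ ∈ p.edges ∧ e₁ ≠ e₂ ∧
        v ∈ e₁ ∧ v ∈ e₂ ∧ e₁ ∈ F ∧ e₂ ∉ F := by
  obtain ⟨⟨x, a⟩, hxaF⟩ := hFne
  obtain ⟨⟨y, b⟩, hyb, hybF⟩ := Set.exists_of_ssubset (hFsub.ssubset_of_ne hFproper)
  obtain ⟨v, u, w, hvu, hvw, hvuF, hvwF⟩ := ((hconn x y).some).exists_adj_mem_adj_not_mem
    ⟨a, hFsub hxaF, hxaF⟩ ⟨b, hyb, hybF⟩
  have huw : u ≠ w := by rintro rfl; exact hvwF hvuF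
  obtain ⟨P, hP, hPv⟩ := (h2conn v).preconnected.exists_isPath_support_subset
    (Set.mem_compl_singleton_iff.mpr hvu.ne') (Set.mem_compl_singleton_iff.mpr hvw.ne')
  refine ⟨v, .cons hvu (P.concat hvw.symm),
    hP.cons_concat_isCycle (fun h ↦ hPv v h rfl) hvu hvw.symm huw,
    v, SimpleGraph.Walk.start_mem_support _, s(v, u), s(w, v), ?_, ?_, ?_, Sym2.mem_mk_left _ _,
    Sym2.mem_mk_right _ _, hvuF, by rwa [Sym2.eq_swap]⟩
  · simp
  · simp
  · rw [Ne, Sym2.eq_iff]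
    rintro (⟨-, huv⟩ | ⟨-, huw'⟩)
    · exact hvu.ne huv.symm
    · exact huw huw'

/-- Let `H` be a finite simple graph that is 2-connected, and let `F` be a
nonempty proper subset of the edge set of `H`. Then there exist a simple cycle `p` in `H`
and a vertex `v` lying on `p` such that exactly one of the two edges of `p` incident to `v`
belongs to `F` (expressed as: there are two distinct edges of `p` incident to `v`, one in
`F` and one not in `F`; a simple cycle has exactly two edges at each of its vertices). -/
theorem stmt_2 {V : Type} [Fintype V] [DecidableEq V]
    (H : SimpleGraph V)
    (hconn : H.Connected)
    (h2conn : ∀ v : V, (H.induce ({v}ᶜ : Set V)).Connected)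
    (F : Set (Sym2 V)) (hFsub : F ⊆ H.edgeSet) (hFne : F.Nonempty)
    (hFproper : F ≠ H.edgeSet) :
    ∃ (u : V) (p : H.Walk u u), p.IsCycle ∧
      ∃ v ∈ p.support, ∃ e₁ e₂ : Sym2 V,
        e₁ ∈ p.edges ∧ e₂ ∈ p.edges ∧ e₁ ≠ e₂ ∧
        v ∈ e₁ ∧ v ∈ e₂ ∧ e₁ ∈ F ∧ e₂ ∉ F :=
  stmt_2_general H hconn h2conn F hFsub hFne hFproper
end

section
/- For every c ∈ ℝⁿ there exists exactly one y ∈ ℝⁿ such that F_A(y) = c. In particular, for every w ∈ ℝ^m, the steady-state equation κ(y) + A γ(Aᵀ y) = −A w has a unique solution y ∈ ℝⁿ. -/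
/-!
`F_A - c` is the derivative of the potential
`G(y) = ∑ᵢ ∫₀^{yᵢ} κᵢ + ∑ₑ ∫₀^{(Aᵀy)ₑ} γₑ - c ⬝ᵥ y`.
As `κᵢ - ρ·id` and `γₑ` are nondecreasing, `G(y) ≥ (ρ/2) y ⬝ᵥ y + (F_A 0 - c) ⬝ᵥ y`,
so `G` is coercive and attains a global minimum, at which `F_A y = c`.
Uniqueness comes from strong monotonicity, `ρ |y - z|² ≤ (F_A y - F_A z) ⬝ᵥ (y - z)`:
the edge term contributes `(γ(Aᵀy) - γ(Aᵀz)) ⬝ᵥ (Aᵀy - Aᵀz) ≥ 0`.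
-/

open Filter Matrix

lemma monotone_sub_mul_of_le_deriv {k : ℝ → ℝ} {ρ : ℝ} (hk : Differentiable ℝ k)
    (hρ : ∀ s, ρ ≤ deriv k s) : Monotone fun s => k s - ρ * s := by
  have hlin : Differentiable ℝ fun s : ℝ => ρ * s := differentiable_id.const_mul ρ
  refine monotone_of_deriv_nonneg (hk.sub hlin) fun s => ?_
  rw [deriv_fun_sub (hk s) (hlin s), deriv_const_mul_field', deriv_id'']
  linarith [hρ s]

lemma Monotone.intervalIntegral_sub_apply_zero_nonneg {φ : ℝ → ℝ} (hφ : Monotone φ) (t : ℝ) :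
    0 ≤ ∫ s in (0 : ℝ)..t, (φ s - φ 0) := by
  rcases le_total 0 t with ht | ht
  · exact intervalIntegral.integral_nonneg ht fun s hs => sub_nonneg.2 (hφ hs.1)
  · rw [intervalIntegral.integral_symm, ← intervalIntegral.integral_neg]
    exact intervalIntegral.integral_nonneg ht fun s hs => neg_nonneg.2 (sub_nonpos.2 (hφ hs.2))

lemma le_intervalIntegral_of_monotone_sub_mul {k : ℝ → ℝ} {ρ : ℝ}
    (hk : Monotone fun s => k s - ρ * s) (t : ℝ) :
    k 0 * t + ρ / 2 * t ^ 2 ≤ ∫ s in (0 : ℝ)..t, k s := by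
  have hφ := hk.intervalIntegrable (μ := MeasureTheory.volume) (a := 0) (b := t)
  have hlin : IntervalIntegrable (fun s => ρ * s) MeasureTheory.volume 0 t :=
    (continuous_const.mul continuous_id).intervalIntegrable 0 t
  have hsplit : ∫ s in (0 : ℝ)..t, k s = ∫ s in (0 : ℝ)..t, ((k s - ρ * s) + ρ * s) := by
    simp only [sub_add_cancel]
  have hsub := intervalIntegral.integral_sub hφ (intervalIntegrable_const (c := k 0 - ρ * 0))
  rw [hsplit, intervalIntegral.integral_add hφ hlin, intervalIntegral.integral_const_mul,
    integral_id]
  simp only [intervalIntegral.integral_const, smul_eq_mul] at hsub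
  linarith [hk.intervalIntegral_sub_apply_zero_nonneg t]

section DotProduct

variable {ι : Type*} [Fintype ι]

noncomputable def dotProductCLM (w : ι → ℝ) : (ι → ℝ) →L[ℝ] ℝ :=
  ∑ i, w i • ContinuousLinearMap.proj i

@[simp]
lemma dotProductCLM_apply (w v : ι → ℝ) : dotProductCLM w v = w ⬝ᵥ v := by
  simp [dotProductCLM, dotProduct]

lemma dotProductCLM_eq_zero_iff {w : ι → ℝ} : dotProductCLM w = 0 ↔ w = 0 := by
  refine ⟨fun h => dotProduct_self_eq_zero.1 ?_, fun h => by ext; simp [h]⟩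
  rw [← dotProductCLM_apply, h, _root_.zero_apply]

lemma dotProductCLM_comp_mulVec {ε : Type*} [Fintype ε] (A : Matrix ι ε ℝ) (u : ε → ℝ) :
    (dotProductCLM u).comp (LinearMap.toContinuousLinearMap (mulVecLin Aᵀ))
      = dotProductCLM (A *ᵥ u) := by
  ext v
  simp only [ContinuousLinearMap.comp_apply, LinearMap.coe_toContinuousLinearMap', mulVecLin_apply,
    dotProductCLM_apply]
  rw [dotProduct_transpose_mulVec, dotProduct_comm]

lemma norm_sq_le_dotProduct_self (y : ι → ℝ) : ‖y‖ ^ 2 ≤ y ⬝ᵥ y := by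
  have hsum : 0 ≤ y ⬝ᵥ y := Finset.sum_nonneg fun i _ => mul_self_nonneg (y i)
  suffices ‖y‖ ≤ √(y ⬝ᵥ y) by
    calc ‖y‖ ^ 2 ≤ √(y ⬝ᵥ y) ^ 2 := by gcongr
      _ = y ⬝ᵥ y := Real.sq_sqrt hsum
  refine (pi_norm_le_iff_of_nonneg (Real.sqrt_nonneg _)).2 fun i => Real.le_sqrt_of_sq_le ?_
  rw [Real.norm_eq_abs, sq_abs, sq]
  exact Finset.single_le_sum (f := fun j => y j * y j) (fun j _ => mul_self_nonneg (y j))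
    (Finset.mem_univ i)

lemma tendsto_dotProduct_add_mul_dotProduct_self_cocompact {ρ : ℝ} (hρ : 0 < ρ) (b : ι → ℝ) :
    Tendsto (fun y => b ⬝ᵥ y + ρ * (y ⬝ᵥ y)) (cocompact (ι → ℝ)) atTop := by
  have hbound : ∀ y : ι → ℝ,
      ρ / 2 * ‖y‖ ^ 2 + -(b ⬝ᵥ b / (2 * ρ)) ≤ b ⬝ᵥ y + ρ * (y ⬝ᵥ y) := by
    intro y
    have hsq : 0 ≤ (b + ρ • y) ⬝ᵥ (b + ρ • y) := Finset.sum_nonneg fun i _ => mul_self_nonneg _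
    simp only [add_dotProduct, dotProduct_add, smul_dotProduct, dotProduct_smul, smul_eq_mul,
      dotProduct_comm y b] at hsq
    have hC : b ⬝ᵥ b / (2 * ρ) * (2 * ρ) = b ⬝ᵥ b := div_mul_cancel₀ _ (by positivity)
    have hN := mul_le_mul_of_nonneg_left (norm_sq_le_dotProduct_self y) (sq_nonneg ρ)
    refine sub_nonneg.1 (nonneg_of_mul_nonneg_right ?_ (by positivity : (0 : ℝ) < 2 * ρ))
    linear_combination hsq + hN - hC
  refine tendsto_atTop_mono hbound (tendsto_atTop_add_const_right _ _ ?_)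
  exact ((tendsto_pow_atTop two_ne_zero).comp tendsto_norm_cocompact_atTop).const_mul_atTop
    (half_pos hρ)

noncomputable def integralPotential (f : ι → ℝ → ℝ) (y : ι → ℝ) : ℝ :=
  ∑ i, ∫ s in (0 : ℝ)..y i, f i s

lemma hasFDerivAt_integralPotential {f : ι → ℝ → ℝ} (hf : ∀ i, Continuous (f i)) (y : ι → ℝ) :
    HasFDerivAt (integralPotential f) (dotProductCLM fun i => f i (y i)) y := by
  unfold integralPotential dotProductCLM
  refine HasFDerivAt.fun_sum fun i _ => ?_
  exact ((hf i).integral_hasStrictDerivAt 0 (y i)).hasDerivAt.comp_hasFDerivAt y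
    (ContinuousLinearMap.proj (R := ℝ) (φ := fun _ : ι => ℝ) i).hasFDerivAt

lemma le_integralPotential {f : ι → ℝ → ℝ} {ρ : ℝ} (hf : ∀ i, Monotone fun s => f i s - ρ * s)
    (y : ι → ℝ) : (fun i => f i 0) ⬝ᵥ y + ρ / 2 * (y ⬝ᵥ y) ≤ integralPotential f y := by
  simp only [integralPotential, dotProduct, Finset.mul_sum, ← Finset.sum_add_distrib]
  refine Finset.sum_le_sum fun i _ => ?_
  linarith [le_intervalIntegral_of_monotone_sub_mul (hf i) (y i)]

lemma mul_dotProduct_self_sub_le {f : ι → ℝ → ℝ} {ρ : ℝ}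
    (hf : ∀ i, Monotone fun s => f i s - ρ * s) (y z : ι → ℝ) :
    ρ * ((y - z) ⬝ᵥ (y - z)) ≤ ((fun i => f i (y i)) - fun i => f i (z i)) ⬝ᵥ (y - z) := by
  simp only [dotProduct, Finset.mul_sum, Pi.sub_apply]
  refine Finset.sum_le_sum fun i _ => ?_
  rcases le_total (y i) (z i) with h | h <;> nlinarith [hf i h]

end DotProduct

lemma exists_hasFDerivAt_eq_zero_of_tendsto_cocompact {E : Type*} [NormedAddCommGroup E]
    [NormedSpace ℝ E] [ProperSpace E] {G : E → ℝ} {G' : E → E →L[ℝ] ℝ}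
    (hG : ∀ y, HasFDerivAt G (G' y) y) (hlim : Tendsto G (cocompact E) atTop) : ∃ y, G' y = 0 := by
  obtain ⟨y, hy⟩ := Continuous.exists_forall_le
    (continuous_iff_continuousAt.2 fun y => (hG y).continuousAt) hlim
  exact ⟨y, IsLocalMin.hasFDerivAt_eq_zero (Eventually.of_forall hy) (hG y)⟩

section SteadyState

variable {ι ε : Type*} [Fintype ι] [Fintype ε] (κ : ι → ℝ → ℝ) (γ : ε → ℝ → ℝ)
  (A : Matrix ι ε ℝ)

def steadyStateMap (y : ι → ℝ) : ι → ℝ :=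
  (fun i => κ i (y i)) + A *ᵥ fun e => γ e ((Aᵀ *ᵥ y) e)

noncomputable def steadyStatePotential (c y : ι → ℝ) : ℝ :=
  integralPotential κ y + integralPotential γ (Aᵀ *ᵥ y) - c ⬝ᵥ y

lemma steadyStateMap_zero :
    steadyStateMap κ γ A 0 = (fun i => κ i 0) + A *ᵥ fun e => γ e 0 := by
  ext i
  simp [steadyStateMap]

variable {κ γ}

lemma hasFDerivAt_steadyStatePotential (hκ : ∀ i, Continuous (κ i)) (hγ : ∀ e, Continuous (γ e))
    (c y : ι → ℝ) :
    HasFDerivAt (steadyStatePotential κ γ A c) (dotProductCLM (steadyStateMap κ γ A y - c)) y := by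
  have hγA := (hasFDerivAt_integralPotential hγ (Aᵀ *ᵥ y)).comp y
    (LinearMap.toContinuousLinearMap (mulVecLin Aᵀ)).hasFDerivAt
  rw [dotProductCLM_comp_mulVec] at hγA
  have hD : dotProductCLM (steadyStateMap κ γ A y - c)
      = (dotProductCLM fun i => κ i (y i)) + dotProductCLM (A *ᵥ fun e => γ e ((Aᵀ *ᵥ y) e))
        - dotProductCLM c := by
    ext v
    simp [steadyStateMap, add_dotProduct, sub_dotProduct]
  have hc : HasFDerivAt (c ⬝ᵥ ·) (dotProductCLM c) y :=
    funext (dotProductCLM_apply c) ▸ (dotProductCLM c).hasFDerivAt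
  rw [hD]
  exact ((hasFDerivAt_integralPotential hκ y).add hγA).sub hc

lemma le_steadyStatePotential {ρ : ℝ} (hκ : ∀ i, Monotone fun s => κ i s - ρ * s)
    (hγ : ∀ e, Monotone (γ e)) (c y : ι → ℝ) :
    (steadyStateMap κ γ A 0 - c) ⬝ᵥ y + ρ / 2 * (y ⬝ᵥ y) ≤ steadyStatePotential κ γ A c y := by
  have hγA := le_integralPotential (ρ := 0) (by simpa using hγ) (Aᵀ *ᵥ y)
  rw [dotProduct_transpose_mulVec, dotProduct_comm] at hγA
  rw [steadyStateMap_zero, sub_dotProduct, add_dotProduct]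
  unfold steadyStatePotential
  linarith [le_integralPotential hκ y]

lemma tendsto_steadyStatePotential_cocompact {ρ : ℝ} (hρ : 0 < ρ)
    (hκ : ∀ i, Monotone fun s => κ i s - ρ * s) (hγ : ∀ e, Monotone (γ e)) (c : ι → ℝ) :
    Tendsto (steadyStatePotential κ γ A c) (cocompact (ι → ℝ)) atTop :=
  tendsto_atTop_mono (le_steadyStatePotential A hκ hγ c)
    (tendsto_dotProduct_add_mul_dotProduct_self_cocompact (half_pos hρ) _)

lemma steadyStateMap_surjective {ρ : ℝ} (hρ : 0 < ρ) (hκc : ∀ i, Continuous (κ i))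
    (hκ : ∀ i, Monotone fun s => κ i s - ρ * s) (hγc : ∀ e, Continuous (γ e))
    (hγ : ∀ e, Monotone (γ e)) : Function.Surjective (steadyStateMap κ γ A) := by
  intro c
  obtain ⟨y, hy⟩ := exists_hasFDerivAt_eq_zero_of_tendsto_cocompact
    (hasFDerivAt_steadyStatePotential A hκc hγc c)
    (tendsto_steadyStatePotential_cocompact A hρ hκ hγ c)
  exact ⟨y, sub_eq_zero.1 (dotProductCLM_eq_zero_iff.1 hy)⟩

lemma mul_dotProduct_self_sub_le_steadyStateMap {ρ : ℝ}
    (hκ : ∀ i, Monotone fun s => κ i s - ρ * s) (hγ : ∀ e, Monotone (γ e)) (y z : ι → ℝ) :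
    ρ * ((y - z) ⬝ᵥ (y - z)) ≤ (steadyStateMap κ γ A y - steadyStateMap κ γ A z) ⬝ᵥ (y - z) := by
  have hγyz := mul_dotProduct_self_sub_le (ρ := 0) (by simpa using hγ) (Aᵀ *ᵥ y) (Aᵀ *ᵥ z)
  simp only [steadyStateMap, add_sub_add_comm, add_dotProduct, ← mulVec_sub]
  rw [dotProduct_comm (A *ᵥ _), ← dotProduct_transpose_mulVec, mulVec_sub]
  linarith [mul_dotProduct_self_sub_le hκ y z]

lemma steadyStateMap_injective {ρ : ℝ} (hρ : 0 < ρ) (hκ : ∀ i, Monotone fun s => κ i s - ρ * s)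
    (hγ : ∀ e, Monotone (γ e)) : Function.Injective (steadyStateMap κ γ A) := by
  intro y z hyz
  have hle := mul_dotProduct_self_sub_le_steadyStateMap A hκ hγ y z
  rw [hyz, sub_self, zero_dotProduct] at hle
  have hnonneg : 0 ≤ (y - z) ⬝ᵥ (y - z) := Finset.sum_nonneg fun i _ => mul_self_nonneg _
  have hzero := le_antisymm (nonpos_of_mul_nonpos_right hle hρ) hnonneg
  exact sub_eq_zero.1 (dotProduct_self_eq_zero.1 hzero)

end SteadyState

theorem stmt_5_general (n m : ℕ) (ρ : ℝ) (hρ : 0 < ρ)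
    (κ : Fin n → ℝ → ℝ) (hκ : ∀ i, ContDiff ℝ 1 (κ i)) (hκ' : ∀ i s, ρ ≤ deriv (κ i) s)
    (γ : Fin m → ℝ → ℝ) (hγc : ∀ e, Continuous (γ e)) (hγm : ∀ e, Monotone (γ e))
    (A : Matrix (Fin n) (Fin m) ℝ)
    (F : (Fin n → ℝ) → Fin n → ℝ)
    (hF : ∀ y, F y = fun i => κ i (y i) + A.mulVec (fun e => γ e (A.transpose.mulVec y e)) i) :
    (∀ c : Fin n → ℝ, ∃! y : Fin n → ℝ, F y = c) ∧
    (∀ w : Fin m → ℝ, ∃! y : Fin n → ℝ,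
      (fun i => κ i (y i) + A.mulVec (fun e => γ e (A.transpose.mulVec y e)) i)
        = -(A.mulVec w)) := by
  have hκd : ∀ i, Differentiable ℝ (κ i) := fun i => (hκ i).differentiable one_ne_zero
  have hκρ : ∀ i, Monotone fun s => κ i s - ρ * s :=
    fun i => monotone_sub_mul_of_le_deriv (hκd i) (hκ' i)
  have hbij : Function.Bijective (steadyStateMap κ γ A) :=
    ⟨steadyStateMap_injective A hρ hκρ hγm,
      steadyStateMap_surjective A hρ (fun i => (hκd i).continuous) hκρ hγc hγm⟩
  obtain rfl : F = steadyStateMap κ γ A := funext hF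
  exact ⟨hbij.existsUnique, fun w => hbij.existsUnique _⟩

/-- With `κᵢ : ℝ → ℝ` continuously differentiable with `κᵢ' ≥ ρ > 0`,
`γₑ : ℝ → ℝ` continuous and nondecreasing, and `A` a real `n × m` matrix, the map
`F_A(y) = κ(y) + A γ(Aᵀ y)` is bijective: for every `c ∈ ℝⁿ` there exists exactly one
`y` with `F_A(y) = c`. In particular, for every `w ∈ ℝᵐ` the steady-state equation
`κ(y) + A γ(Aᵀ y) = −A w` has a unique solution. -/
theorem stmt_5 (n m : ℕ) (hn : 0 < n) (hm : 0 < m) (ρ : ℝ) (hρ : 0 < ρ)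
    (κ : Fin n → ℝ → ℝ) (hκ : ∀ i, ContDiff ℝ 1 (κ i)) (hκ' : ∀ i s, ρ ≤ deriv (κ i) s)
    (γ : Fin m → ℝ → ℝ) (hγc : ∀ e, Continuous (γ e)) (hγm : ∀ e, Monotone (γ e))
    (A : Matrix (Fin n) (Fin m) ℝ)
    (F : (Fin n → ℝ) → Fin n → ℝ)
    (hF : ∀ y, F y = fun i => κ i (y i) + A.mulVec (fun e => γ e (A.transpose.mulVec y e)) i) :
    (∀ c : Fin n → ℝ, ∃! y : Fin n → ℝ, F y = c) ∧
    (∀ w : Fin m → ℝ, ∃! y : Fin n → ℝ,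
      (fun i => κ i (y i) + A.mulVec (fun e => γ e (A.transpose.mulVec y e)) i)
        = -(A.mulVec w)) :=
  stmt_5_general n m ρ hρ κ hκ hκ' γ hγc hγm A F hF
end

section
/- Let ρ = inf over all x ≠ x̄ of the ratio (f(x)/q(x) − f(x̄)/q(x̄)) / (h(x) − h(x̄)). Then: (i) ρ ≥ 0; (ii) S is differentiable on ℝ with S'(x) = (h(x) − h(x̄))/q(x); and (iii) for all x, u ∈ ℝ, writing ū = f(x̄)/q(x̄) and ȳ = h(x̄), the dissipation inequality S'(x) · (−f(x) + q(x)u) ≤ (h(x) − ȳ)(u − ū) − ρ (h(x) − ȳ)² holds. -/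
/-! The storage function is the integral of a continuous integrand, so the fundamental theorem
of calculus gives `S'`. With `φ = f / q`, the left side of the dissipation inequality equals
`(h x - ȳ)(u - ū) - (h x - ȳ)(φ x - φ x̄)`, and the last product dominates `ρ (h x - ȳ)²`
because `ρ` is the infimum of the difference quotients of `φ` against `h`, all of which are
nonnegative since both functions are monotone. -/

lemma Monotone.div_sub_nonneg {α 𝕜 : Type*} [LinearOrder α] [Field 𝕜] [LinearOrder 𝕜]
    [IsStrictOrderedRing 𝕜] {φ ψ : α → 𝕜} (hφ : Monotone φ) (hψ : Monotone ψ)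
    (a x : α) :
    0 ≤ (φ x - φ a) / (ψ x - ψ a) := by
  rcases le_total a x with hax | hxa
  · exact div_nonneg (sub_nonneg.2 (hφ hax)) (sub_nonneg.2 (hψ hax))
  · rw [← neg_div_neg_eq]
    exact div_nonneg (neg_nonneg.2 (sub_nonpos.2 (hφ hxa)))
      (neg_nonneg.2 (sub_nonpos.2 (hψ hxa)))

lemma mul_sq_le_mul_of_le_div {ρ d e : ℝ} (h : ρ ≤ d / e) : ρ * e ^ 2 ≤ e * d := by
  rcases eq_or_ne e 0 with rfl | he
  · simp
  · calc ρ * e ^ 2 ≤ d / e * e ^ 2 := mul_le_mul_of_nonneg_right h (sq_nonneg e)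
      _ = e * d := by field_simp

section DiffQuotient

variable {φ ψ : ℝ → ℝ} (a : ℝ)

lemma sInf_diffQuotient_nonneg (hφ : Monotone φ) (hψ : Monotone ψ) :
    0 ≤ sInf {r : ℝ | ∃ x, x ≠ a ∧ r = (φ x - φ a) / (ψ x - ψ a)} :=
  Real.sInf_nonneg fun _ ⟨x, _, hr⟩ => hr ▸ hφ.div_sub_nonneg hψ a x

lemma sInf_diffQuotient_mul_sq_le (hφ : Monotone φ) (hψ : Monotone ψ) (y : ℝ) :
    sInf {r : ℝ | ∃ x, x ≠ a ∧ r = (φ x - φ a) / (ψ x - ψ a)} * (ψ y - ψ a) ^ 2 ≤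
      (ψ y - ψ a) * (φ y - φ a) := by
  rcases eq_or_ne y a with rfl | hy
  · simp
  · refine mul_sq_le_mul_of_le_div (csInf_le ⟨0, ?_⟩ ⟨y, hy, rfl⟩)
    rintro _ ⟨z, _, rfl⟩
    exact hφ.div_sub_nonneg hψ a z

end DiffQuotient

theorem stmt_8_general (f q h : ℝ → ℝ) (xbar : ℝ)
    (hq_cont : Continuous q) (hq_pos : ∀ x, 0 < q x)
    (hh : ContDiff ℝ 1 h) (hh_mono : StrictMono h)
    (hfq_mono : Monotone (fun x => f x / q x))
    (S : ℝ → ℝ) (hS : ∀ x, S x = ∫ σ in xbar..x, (h σ - h xbar) / q σ)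
    (ρ : ℝ)
    (hρdef : ρ = sInf {r : ℝ | ∃ x, x ≠ xbar ∧
      r = (f x / q x - f xbar / q xbar) / (h x - h xbar)}) :
    0 ≤ ρ ∧
    (∀ x, HasDerivAt S ((h x - h xbar) / q x) x) ∧
    (∀ x u, deriv S x * (-f x + q x * u) ≤
      (h x - h xbar) * (u - f xbar / q xbar) - ρ * (h x - h xbar) ^ 2) := by
  have hcont : Continuous fun σ => (h σ - h xbar) / q σ :=
    (hh.continuous.sub continuous_const).div hq_cont fun x => (hq_pos x).ne'
  have hS' : ∀ x, HasDerivAt S ((h x - h xbar) / q x) x := fun x =>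
    funext hS ▸ (hcont.integral_hasStrictDerivAt xbar x).hasDerivAt
  refine ⟨hρdef ▸ sInf_diffQuotient_nonneg xbar hfq_mono hh_mono.monotone, hS',
    fun x u => ?_⟩
  have hρ := hρdef ▸ sInf_diffQuotient_mul_sq_le xbar hfq_mono hh_mono.monotone x
  have hsupply :
      (h x - h xbar) / q x * (-f x + q x * u) = (h x - h xbar) * (u - f x / q x) := by
    field_simp [(hq_pos x).ne']
    ring
  rw [(hS' x).deriv, hsupply]
  linarith

/-- Let `f, q, h : ℝ → ℝ` with `q` continuous and positive, `h`
continuously differentiable and strictly increasing, and `f/q` continuously differentiable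
and nondecreasing. Fix `x̄` and let `S(x) = ∫_{x̄}^{x} (h(σ) − h(x̄))/q(σ) dσ`, and let
`ρ = inf_{x ≠ x̄} (f(x)/q(x) − f(x̄)/q(x̄)) / (h(x) − h(x̄))`. Then (i) `ρ ≥ 0`;
(ii) `S` is differentiable with `S'(x) = (h(x) − h(x̄))/q(x)`; and (iii) for all `x, u`,
`S'(x)(−f(x) + q(x)u) ≤ (h(x) − ȳ)(u − ū) − ρ (h(x) − ȳ)²` with `ū = f(x̄)/q(x̄)`,
`ȳ = h(x̄)`. -/
theorem stmt_8 (f q h : ℝ → ℝ) (xbar : ℝ)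
    (hq_cont : Continuous q) (hq_pos : ∀ x, 0 < q x)
    (hh : ContDiff ℝ 1 h) (hh_mono : StrictMono h)
    (hfq : ContDiff ℝ 1 (fun x => f x / q x)) (hfq_mono : Monotone (fun x => f x / q x))
    (S : ℝ → ℝ) (hS : ∀ x, S x = ∫ σ in xbar..x, (h σ - h xbar) / q σ)
    (ρ : ℝ)
    (hρdef : ρ = sInf {r : ℝ | ∃ x, x ≠ xbar ∧
      r = (f x / q x - f xbar / q xbar) / (h x - h xbar)}) :
    0 ≤ ρ ∧
    (∀ x, HasDerivAt S ((h x - h xbar) / q x) x) ∧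
    (∀ x u, deriv S x * (-f x + q x * u) ≤
      (h x - h xbar) * (u - f xbar / q xbar) - ρ * (h x - h xbar) ^ 2) :=
  stmt_8_general f q h xbar hq_cont hq_pos hh hh_mono hfq_mono S hS ρ hρdef
end

section
/- There exists a strictly increasing function Ω : [0, ∞) → [0, ∞) with Ω(0) = 0 such that Ω(S(x)) ≤ (h(x) − h(x̄))² for every x ∈ ℝ. -/
/-!
Relax "the infimum of `(h x - h x̄)²` over `{x | θ ≤ S x}`" to the infimum over all `x` of
`(h x - h x̄)² + max (θ - S x) 0`. This is monotone in `θ` and at most `(h x - h x̄)²` at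
`θ = S x`. It is positive for `θ > 0`: `S` is continuous (a monotone `h` is locally integrable)
with `S x̄ = 0`, so `S x ≥ θ / 2` keeps `x` away from `x̄`, where the strictly increasing `h`
keeps `(h x - h x̄)²` away from `0`. Multiplying by `1 - exp (-θ)` makes it strictly increasing.
-/

open Set

section PenalizedInf

variable {X : Type*} (S φ : X → ℝ)

/-- A relaxation of `⨅ x ∈ {x | θ ≤ S x}, φ x` that stays meaningful when that set is empty. -/
noncomputable def penalizedInf (θ : ℝ) : ℝ :=
  ⨅ x, (φ x + max (θ - S x) 0)

variable {S φ}

lemma bddBelow_range_penalty (hφ : ∀ x, 0 ≤ φ x) (θ : ℝ) :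
    BddBelow (range fun x => φ x + max (θ - S x) 0) :=
  ⟨0, by rintro _ ⟨x, rfl⟩; exact add_nonneg (hφ x) (le_max_right _ _)⟩

lemma penalizedInf_nonneg (hφ : ∀ x, 0 ≤ φ x) (θ : ℝ) : 0 ≤ penalizedInf S φ θ :=
  Real.iInf_nonneg fun x => add_nonneg (hφ x) (le_max_right _ _)

lemma penalizedInf_le (hφ : ∀ x, 0 ≤ φ x) (x : X) : penalizedInf S φ (S x) ≤ φ x := by
  simpa [penalizedInf] using ciInf_le (bddBelow_range_penalty (S := S) hφ (S x)) x

lemma penalizedInf_mono (hφ : ∀ x, 0 ≤ φ x) : Monotone (penalizedInf S φ) :=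
  fun _ _ hθ => ciInf_mono (bddBelow_range_penalty hφ _) fun _ => by gcongr

lemma penalizedInf_pos [Nonempty X] (hφS : ∀ θ > 0, ∃ c > 0, ∀ x, θ ≤ S x → c ≤ φ x)
    (hφ : ∀ x, 0 ≤ φ x) {θ : ℝ} (hθ : 0 < θ) : 0 < penalizedInf S φ θ := by
  obtain ⟨c, hc, hcφ⟩ := hφS (θ / 2) (half_pos hθ)
  refine (lt_min hc (half_pos hθ)).trans_le (le_ciInf fun x => ?_)
  rcases le_or_gt (θ / 2) (S x) with hx | hx
  · linarith [min_le_left c (θ / 2), hcφ x hx, le_max_right (θ - S x) 0]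
  · linarith [min_le_right c (θ / 2), hφ x, le_max_left (θ - S x) 0]

end PenalizedInf

lemma strictMonoOn_one_sub_exp_neg_mul {f : ℝ → ℝ} (hf : MonotoneOn f (Ici 0))
    (hf_pos : ∀ θ > 0, 0 < f θ) :
    StrictMonoOn (fun θ => (1 - Real.exp (-θ)) * f θ) (Ici 0) := by
  intro a (ha : 0 ≤ a) b (hb : 0 ≤ b) hab
  have hexp : Real.exp (-b) < Real.exp (-a) := Real.exp_lt_exp.2 (neg_lt_neg hab)
  have hb_pos : 0 < f b := hf_pos b (ha.trans_lt hab)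
  rcases ha.eq_or_lt with rfl | ha_pos
  · simpa using mul_pos (sub_pos.2 hexp) hb_pos
  · have hfa := hf_pos a ha_pos
    have hea : Real.exp (-a) < 1 := Real.exp_lt_one_iff.2 (neg_lt_zero.2 ha_pos)
    calc (1 - Real.exp (-a)) * f a < (1 - Real.exp (-b)) * f a := by gcongr
      _ ≤ (1 - Real.exp (-b)) * f b :=
        mul_le_mul_of_nonneg_left (hf ha hb hab.le) (by linarith)

lemma exists_strictMonoOn_comp_le {X : Type*} [Nonempty X] {S φ : X → ℝ} (hφ : ∀ x, 0 ≤ φ x)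
    (hφS : ∀ θ > 0, ∃ c > 0, ∀ x, θ ≤ S x → c ≤ φ x) :
    ∃ Ω : ℝ → ℝ, StrictMonoOn Ω (Ici 0) ∧ Ω 0 = 0 ∧ (∀ θ, 0 ≤ θ → 0 ≤ Ω θ) ∧
      ∀ x, Ω (S x) ≤ φ x := by
  refine ⟨fun θ => (1 - Real.exp (-θ)) * penalizedInf S φ θ,
    strictMonoOn_one_sub_exp_neg_mul ((penalizedInf_mono hφ).monotoneOn _)
      fun _ => penalizedInf_pos hφS hφ, by simp, fun θ hθ => ?_, fun x => ?_⟩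
  · have : Real.exp (-θ) ≤ 1 := Real.exp_le_one_iff.2 (neg_nonpos.2 hθ)
    exact mul_nonneg (by linarith) (penalizedInf_nonneg hφ θ)
  · have : 1 - Real.exp (-S x) ≤ 1 := by linarith [Real.exp_pos (-S x)]
    exact (mul_le_of_le_one_left (penalizedInf_nonneg hφ _) this).trans (penalizedInf_le hφ x)

lemma StrictMono.exists_pos_le_abs_sub {h : ℝ → ℝ} (hh : StrictMono h) (a : ℝ) {δ : ℝ}
    (hδ : 0 < δ) : ∃ ε > 0, ∀ x, δ ≤ |x - a| → ε ≤ |h x - h a| := by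
  refine ⟨min (h (a + δ) - h a) (h a - h (a - δ)),
    lt_min (sub_pos.2 (hh (by linarith))) (sub_pos.2 (hh (by linarith))), fun x hx => ?_⟩
  rcases le_abs'.1 hx with hx | hx
  · have : h x ≤ h (a - δ) := hh.monotone (by linarith)
    rw [abs_sub_comm]
    exact (min_le_right _ _).trans ((by linarith : h a - h (a - δ) ≤ h a - h x).trans
      (le_abs_self _))
  · have : h (a + δ) ≤ h x := hh.monotone (by linarith)
    exact (min_le_left _ _).trans ((by linarith : h (a + δ) - h a ≤ h x - h a).trans
      (le_abs_self _))

lemma StrictMono.exists_pos_le_sq_sub {h S : ℝ → ℝ} (hh : StrictMono h) {a : ℝ}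
    (hS : ContinuousAt S a) (hSa : S a = 0) :
    ∀ θ > 0, ∃ c > 0, ∀ x, θ ≤ S x → c ≤ (h x - h a) ^ 2 := by
  intro θ hθ
  obtain ⟨δ, hδ, hδS⟩ := Metric.eventually_nhds_iff.1 (hS.eventually (gt_mem_nhds (hSa ▸ hθ)))
  obtain ⟨ε, hε, hεh⟩ := hh.exists_pos_le_abs_sub a hδ
  refine ⟨ε ^ 2, by positivity, fun x hx => ?_⟩
  have hxa : δ ≤ |x - a| := by
    by_contra! hlt
    exact (hδS (by rwa [Real.dist_eq])).not_ge hx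
  simpa only [sq_abs] using pow_le_pow_left₀ hε.le (hεh x hxa) 2

theorem stmt_10_general (q h : ℝ → ℝ) (xbar : ℝ)
    (hq_cont : Continuous q) (hq_pos : ∀ x, 0 < q x)
    (hh_mono : StrictMono h)
    (S : ℝ → ℝ) (hS : ∀ x, S x = ∫ σ in xbar..x, (h σ - h xbar) / q σ) :
    ∃ Ω : ℝ → ℝ, StrictMonoOn Ω (Set.Ici 0) ∧ Ω 0 = 0 ∧
      (∀ θ, 0 ≤ θ → 0 ≤ Ω θ) ∧
      (∀ x, Ω (S x) ≤ (h x - h xbar) ^ 2) := by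
  have hS_cont : Continuous S := by
    rw [funext hS]
    simp_rw [div_eq_mul_inv]
    refine intervalIntegral.continuous_primitive (fun a b => ?_) xbar
    exact (hh_mono.monotone.intervalIntegrable.sub intervalIntegrable_const).mul_continuousOn
      (hq_cont.continuousOn.inv₀ fun x _ => (hq_pos x).ne')
  have hS_xbar : S xbar = 0 := by simp [hS]
  exact exists_strictMonoOn_comp_le (fun x => sq_nonneg _)
    (hh_mono.exists_pos_le_sq_sub hS_cont.continuousAt hS_xbar)

/-- Let `q : ℝ → ℝ` be continuous and positive, `h : ℝ → ℝ` continuous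
and strictly increasing, fix `x̄`, and let `S(x) = ∫_{x̄}^{x} (h(σ) − h(x̄))/q(σ) dσ`.
Then there exists a strictly increasing function `Ω : [0, ∞) → [0, ∞)` with `Ω(0) = 0`
such that `Ω(S(x)) ≤ (h(x) − h(x̄))²` for every `x`. -/
theorem stmt_10 (q h : ℝ → ℝ) (xbar : ℝ)
    (hq_cont : Continuous q) (hq_pos : ∀ x, 0 < q x)
    (hh_cont : Continuous h) (hh_mono : StrictMono h)
    (S : ℝ → ℝ) (hS : ∀ x, S x = ∫ σ in xbar..x, (h σ - h xbar) / q σ) :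
    ∃ Ω : ℝ → ℝ, StrictMonoOn Ω (Set.Ici 0) ∧ Ω 0 = 0 ∧
      (∀ θ, 0 ≤ θ → 0 ≤ Ω θ) ∧
      (∀ x, Ω (S x) ≤ (h x - h xbar) ^ 2) :=
  stmt_10_general q h xbar hq_cont hq_pos hh_mono S hS
end

section
/- Suppose additionally there are α > 0 and C > 0 such that lim_{x → x̄} |h(x) − h(x̄)| / |x − x̄|^α = C. For θ ≥ 0, define ω(θ) = sup { S(x) : x ∈ ℝ, (h(x) − h(x̄))² ≤ θ } (a value in [0, ∞]). Then ω(θ) is finite for all sufficiently small θ > 0, and lim_{θ → 0⁺} ω(θ) / θ^{(α+1)/(2α)} = 1 / ( q(x̄) (α + 1) C^{1/α} ). In particular, the generalized inverse Ω of ω satisfies that lim_{θ → 0⁺} Ω(θ)/θ^{β} exists and is finite for β = 2α/(α+1). -/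
/-!
By L'Hôpital's rule, `S x ~ |x - x̄| ^ (α + 1) / (q x̄ (α + 1))`, while
`|h x - h x̄| ~ C |x - x̄| ^ α`; eliminating `|x - x̄|` gives
`S x ~ K ((h x - h x̄) ^ 2) ^ p` with `p = (α + 1) / (2α)` and `K = 1 / (q x̄ (α + 1) C ^ (1 / α))`.
As `h` is strictly monotone, the sublevel sets `{(h - h x̄) ^ 2 ≤ θ}` shrink to `x̄` as `θ → 0`,
and by continuity every small level `θ` is attained near `x̄`; hence `ω θ ~ K θ ^ p`.
Inverting this power law, `Ω s ~ (s / K) ^ (1 / p)`.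
-/

open Filter Set Topology

theorem coe_sign_ne_zero {x : ℝ} (hx : x ≠ 0) : (SignType.sign x : ℝ) ≠ 0 := by
  rcases hx.lt_or_gt with h | h <;> simp [h]

theorem tendsto_integral_div_abs_sub_rpow {f : ℝ → ℝ} {a α L : ℝ} (hf : Continuous f)
    (hα : -1 < α)
    (hlim : Tendsto (fun x => f x / (SignType.sign (x - a) * |x - a| ^ α)) (𝓝[≠] a) (𝓝 L)) :
    Tendsto (fun x => (∫ t in a..x, f t) / |x - a| ^ (α + 1)) (𝓝[≠] a)
      (𝓝 (L / (α + 1))) := by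
  have hα1 : 0 < α + 1 := by linarith
  have hg : ∀ x ≠ a, HasDerivAt (fun y => |y - a| ^ (α + 1))
      ((α + 1) * (SignType.sign (x - a) * |x - a| ^ α)) x := by
    intro x hx
    have hxa : x - a ≠ 0 := sub_ne_zero.2 hx
    have h := ((hasDerivAt_abs hxa).comp x ((hasDerivAt_id x).sub_const a)).rpow_const
      (p := α + 1) (Or.inl (abs_ne_zero.2 hxa))
    simp only [Function.comp_def, id, add_sub_cancel_right, mul_one] at h
    convert h using 1
    ring
  refine HasDerivAt.lhopital_zero_nhdsNE (f' := f) ?_ (eventually_nhdsWithin_of_forall hg)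
    ?_ ?_ ?_ ?_
  · exact Eventually.of_forall fun x => (hf.integral_hasStrictDerivAt a x).hasDerivAt
  · filter_upwards [self_mem_nhdsWithin] with x hx
    have hxa : x - a ≠ 0 := sub_ne_zero.2 hx
    have hpow : (0 : ℝ) < |x - a| ^ α := Real.rpow_pos_of_pos (abs_pos.2 hxa) α
    exact mul_ne_zero hα1.ne' (mul_ne_zero (coe_sign_ne_zero hxa) hpow.ne')
  · have := (intervalIntegral.integral_hasDerivAt_right (hf.intervalIntegrable a a)
      hf.aestronglyMeasurable.stronglyMeasurableAtFilter hf.continuousAt).continuousAt.tendsto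
    simpa using this.mono_left nhdsWithin_le_nhds
  · have : Continuous fun y : ℝ => |y - a| ^ (α + 1) := by fun_prop (disch := positivity)
    simpa [Real.zero_rpow hα1.ne'] using (this.tendsto a).mono_left nhdsWithin_le_nhds
  · refine (hlim.div_const (α + 1)).congr fun x => ?_
    rw [div_div, mul_comm]

theorem tendsto_div_sq_rpow_of_tendsto {F u : ℝ → ℝ} {a α M C : ℝ} (hα : 0 < α) (hC : 0 < C)
    (hF : Tendsto (fun x => F x / |x - a| ^ (α + 1)) (𝓝[≠] a) (𝓝 M))
    (hu : Tendsto (fun x => |u x| / |x - a| ^ α) (𝓝[≠] a) (𝓝 C)) :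
    Tendsto (fun x => F x / (u x ^ 2) ^ ((α + 1) / (2 * α))) (𝓝[≠] a)
      (𝓝 (M / C ^ ((α + 1) / α))) := by
  have hr : ContinuousAt (fun t : ℝ => t ^ ((α + 1) / α)) C :=
    Real.continuousAt_rpow_const _ _ (Or.inl hC.ne')
  refine (hF.div (hr.tendsto.comp hu) (Real.rpow_pos_of_pos hC _).ne').congr' ?_
  filter_upwards [self_mem_nhdsWithin] with x hx
  have hd : 0 < |x - a| := abs_pos.2 (sub_ne_zero.2 hx)
  have hsq : (u x ^ 2) ^ ((α + 1) / (2 * α)) = |u x| ^ ((α + 1) / α) := by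
    rw [← sq_abs, ← Real.rpow_natCast, ← Real.rpow_mul (abs_nonneg _)]
    push_cast
    field_simp
  have hquot : (|u x| / |x - a| ^ α) ^ ((α + 1) / α)
      = |u x| ^ ((α + 1) / α) / |x - a| ^ (α + 1) := by
    rw [Real.div_rpow (abs_nonneg _) (Real.rpow_nonneg hd.le _), ← Real.rpow_mul hd.le]
    congr 2
    field_simp
  rw [Pi.div_apply, Function.comp_apply, hsq, hquot,
    div_div_div_cancel_right₀ (Real.rpow_pos_of_pos hd _).ne']

theorem StrictMono.sub_eq_sign_mul_abs {h : ℝ → ℝ} (hh : StrictMono h) (x a : ℝ) :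
    h x - h a = SignType.sign (x - a) * |h x - h a| := by
  rcases lt_trichotomy x a with hxa | rfl | hxa
  · have := sub_neg.2 (hh hxa)
    simp [sub_neg.2 hxa, abs_of_neg this]
  · simp
  · have := sub_pos.2 (hh hxa)
    simp [sub_pos.2 hxa, abs_of_pos this]

noncomputable def storage (q h : ℝ → ℝ) (a x : ℝ) : ℝ := ∫ t in a..x, (h t - h a) / q t

theorem storage_self (q h : ℝ → ℝ) (a : ℝ) : storage q h a a = 0 :=
  intervalIntegral.integral_same

theorem tendsto_storage_div_abs_sub_rpow {q h : ℝ → ℝ} {a α C : ℝ}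
    (hq : Continuous q) (hq0 : ∀ x, q x ≠ 0) (hh : Continuous h) (hh_mono : StrictMono h)
    (hα : -1 < α) (hlim : Tendsto (fun x => |h x - h a| / |x - a| ^ α) (𝓝[≠] a) (𝓝 C)) :
    Tendsto (fun x => storage q h a x / |x - a| ^ (α + 1)) (𝓝[≠] a)
      (𝓝 (C / q a / (α + 1))) := by
  refine tendsto_integral_div_abs_sub_rpow ((hh.sub continuous_const).div hq hq0) hα ?_
  have hq_lim : Tendsto q (𝓝[≠] a) (𝓝 (q a)) := hq.continuousAt.tendsto.mono_left nhdsWithin_le_nhds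
  refine (hlim.div hq_lim (hq0 a)).congr' ?_
  filter_upwards [self_mem_nhdsWithin] with x hx
  have := coe_sign_ne_zero (sub_ne_zero.2 hx)
  rw [hh_mono.sub_eq_sign_mul_abs x a, Pi.div_apply]
  field_simp

theorem tendsto_storage_div_sq_rpow {q h : ℝ → ℝ} {a α C : ℝ}
    (hq : Continuous q) (hq0 : ∀ x, q x ≠ 0) (hh : Continuous h) (hh_mono : StrictMono h)
    (hα : 0 < α) (hC : 0 < C)
    (hlim : Tendsto (fun x => |h x - h a| / |x - a| ^ α) (𝓝[≠] a) (𝓝 C)) :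
    Tendsto (fun x => storage q h a x / ((h x - h a) ^ 2) ^ ((α + 1) / (2 * α)))
      (𝓝[≠] a) (𝓝 (1 / (q a * (α + 1) * C ^ (1 / α)))) := by
  convert tendsto_div_sq_rpow_of_tendsto hα hC (tendsto_storage_div_abs_sub_rpow hq hq0 hh
    hh_mono (by linarith) hlim) hlim using 2
  have := hq0 a
  have := (Real.rpow_pos_of_pos hC (1 / α)).ne'
  rw [show (α + 1) / α = 1 + 1 / α by field_simp, Real.rpow_add hC, Real.rpow_one]
  field_simp

theorem StrictMono.tendsto_sublevel_sq_sub_smallSets {h : ℝ → ℝ} (hh : StrictMono h) (a : ℝ) :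
    Tendsto (fun θ => {x | (h x - h a) ^ 2 ≤ θ}) (𝓝 0) (𝓝 a).smallSets := by
  refine tendsto_smallSets_iff.2 fun U hU => ?_
  obtain ⟨ε, hε, hball⟩ := Metric.mem_nhds_iff.1 hU
  set η := min (h (a + ε) - h a) (h a - h (a - ε))
  have hη : 0 < η := lt_min (sub_pos.2 (hh (by linarith))) (sub_pos.2 (hh (by linarith)))
  filter_upwards [gt_mem_nhds (pow_pos hη 2)] with θ hθ x hx
  have habs : |h x - h a| < η := abs_lt_of_sq_lt_sq (hx.trans_lt hθ) hη.le
  rw [abs_lt] at habs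
  have hlt : h (a - ε) < h x ∧ h x < h (a + ε) := by
    constructor <;> linarith [min_le_left (h (a + ε) - h a) (h a - h (a - ε)),
      min_le_right (h (a + ε) - h a) (h a - h (a - ε))]
  apply hball
  rw [Metric.mem_ball, Real.dist_eq, abs_lt]
  constructor <;> linarith [hh.lt_iff_lt.1 hlt.1, hh.lt_iff_lt.1 hlt.2]

section Sublevel

variable {φ S : ℝ → ℝ} {a p K c : ℝ}

theorem eventually_forall_sublevel_le (hφpos : ∀ x ≠ a, 0 < φ x)
    (hloc : Tendsto (fun θ => {x | φ x ≤ θ}) (𝓝[>] 0) (𝓝 a).smallSets) (hSa : S a = 0)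
    (hp : 0 ≤ p) (hlim : Tendsto (fun x => S x / φ x ^ p) (𝓝[≠] a) (𝓝 K)) (hc : 0 ≤ c)
    (hKc : K < c) :
    ∀ᶠ θ in 𝓝[>] 0, ∀ x, φ x ≤ θ → S x ≤ c * θ ^ p := by
  have hnear : ∀ᶠ x in 𝓝 a, x ≠ a → S x / φ x ^ p < c :=
    eventually_nhdsWithin_iff.1 (hlim.eventually (gt_mem_nhds hKc))
  filter_upwards [tendsto_smallSets_iff.1 hloc _ hnear, self_mem_nhdsWithin]
    with θ hθ (hθ0 : 0 < θ) x hx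
  rcases eq_or_ne x a with rfl | hxa
  · rw [hSa]
    positivity
  have hφx := hφpos x hxa
  calc S x ≤ c * φ x ^ p :=
        ((div_lt_iff₀ (Real.rpow_pos_of_pos hφx p)).1 (hθ hx hxa)).le
    _ ≤ c * θ ^ p := by gcongr

theorem eventually_exists_sublevel_lt (hφ : Continuous φ) (hφa : φ a = 0)
    (hφpos : ∀ x ≠ a, 0 < φ x) (hlim : Tendsto (fun x => S x / φ x ^ p) (𝓝[≠] a) (𝓝 K))
    (hcK : c < K) :
    ∀ᶠ θ in 𝓝[>] 0, ∃ x, φ x ≤ θ ∧ c * θ ^ p < S x := by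
  have hright : ∀ᶠ x in 𝓝[>] a, c < S x / φ x ^ p :=
    nhdsWithin_mono _ (fun x hx => ne_of_gt hx) (hlim.eventually (lt_mem_nhds hcK))
  obtain ⟨b, hab, hb⟩ := mem_nhdsGT_iff_exists_Ioc_subset.1 hright
  filter_upwards [Ioc_mem_nhdsGT (hφpos b (ne_of_gt hab))] with θ ⟨hθ0, hθb⟩
  obtain ⟨x, hx, rfl⟩ := intermediate_value_Icc hab.le hφ.continuousOn ⟨hφa ▸ hθ0.le, hθb⟩
  have hxa : x ≠ a := by
    rintro rfl
    exact hθ0.ne' hφa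
  refine ⟨x, le_rfl, ?_⟩
  exact (lt_div_iff₀ (Real.rpow_pos_of_pos hθ0 p)).1 (hb ⟨lt_of_le_of_ne hx.1 hxa.symm, hx.2⟩)

theorem eventually_bddAbove_sublevel (hφpos : ∀ x ≠ a, 0 < φ x)
    (hloc : Tendsto (fun θ => {x | φ x ≤ θ}) (𝓝[>] 0) (𝓝 a).smallSets) (hSa : S a = 0)
    (hp : 0 ≤ p) (hlim : Tendsto (fun x => S x / φ x ^ p) (𝓝[≠] a) (𝓝 K)) (hK : 0 ≤ K) :
    ∀ᶠ θ in 𝓝[>] 0, BddAbove {s | ∃ x, φ x ≤ θ ∧ s = S x} := by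
  filter_upwards [eventually_forall_sublevel_le hφpos hloc hSa hp hlim (by linarith)
    (lt_add_one K)] with θ hθ
  exact ⟨_, by rintro _ ⟨x, hx, rfl⟩; exact hθ x hx⟩

theorem tendsto_sSup_sublevel_div_rpow (hφ : Continuous φ) (hφa : φ a = 0)
    (hφpos : ∀ x ≠ a, 0 < φ x)
    (hloc : Tendsto (fun θ => {x | φ x ≤ θ}) (𝓝[>] 0) (𝓝 a).smallSets) (hSa : S a = 0)
    (hp : 0 ≤ p) (hlim : Tendsto (fun x => S x / φ x ^ p) (𝓝[≠] a) (𝓝 K)) (hK : 0 ≤ K) :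
    Tendsto (fun θ => sSup {s | ∃ x, φ x ≤ θ ∧ s = S x} / θ ^ p) (𝓝[>] 0) (𝓝 K) := by
  refine tendsto_order.2 ⟨fun c hcK => ?_, fun c hKc => ?_⟩
  · filter_upwards [eventually_exists_sublevel_lt hφ hφa hφpos hlim hcK,
      eventually_bddAbove_sublevel hφpos hloc hSa hp hlim hK, self_mem_nhdsWithin]
      with θ ⟨x, hx, hSx⟩ hbdd (hθ0 : 0 < θ)
    rw [lt_div_iff₀ (Real.rpow_pos_of_pos hθ0 p)]
    exact hSx.trans_le (le_csSup hbdd ⟨x, hx, rfl⟩)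
  · obtain ⟨c', hKc', hc'c⟩ := exists_between hKc
    filter_upwards [eventually_forall_sublevel_le hφpos hloc hSa hp hlim (hK.trans hKc'.le) hKc',
      self_mem_nhdsWithin] with θ hθ (hθ0 : 0 < θ)
    rw [div_lt_iff₀ (Real.rpow_pos_of_pos hθ0 p)]
    calc sSup {s | ∃ x, φ x ≤ θ ∧ s = S x}
        ≤ c' * θ ^ p := csSup_le ⟨S a, a, hφa.trans_le hθ0.le, rfl⟩ (by
          rintro _ ⟨x, hx, rfl⟩
          exact hθ x hx)
      _ < c * θ ^ p := by gcongr

theorem sSup_sublevel_zero (hφa : φ a = 0) (hφpos : ∀ x ≠ a, 0 < φ x) :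
    sSup {s | ∃ x, φ x ≤ 0 ∧ s = S x} = S a := by
  have hsub : {s | ∃ x, φ x ≤ 0 ∧ s = S x} = {S a} := by
    ext s
    refine ⟨?_, fun hs => ⟨a, hφa.le, hs⟩⟩
    rintro ⟨x, hx, rfl⟩
    by_contra hxa
    exact (hφpos x (fun h => hxa (h ▸ rfl))).not_ge hx
  rw [hsub, csSup_singleton]

end Sublevel

theorem tendsto_of_frequently_eventually_bounds {ι : Type*} {F : ι → ℝ} {l : Filter ι}
    {g : ℝ → ℝ} {K : ℝ} (hg : ContinuousAt g K)
    (hup : ∃ᶠ c in 𝓝 K, ∀ᶠ s in l, F s ≤ g c) (hlow : ∃ᶠ c in 𝓝 K, ∀ᶠ s in l, g c ≤ F s) :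
    Tendsto F l (𝓝 (g K)) := by
  refine tendsto_order.2 ⟨fun b hb => ?_, fun b hb => ?_⟩
  · obtain ⟨c, hc, hbc⟩ := (hlow.and_eventually (hg.eventually (lt_mem_nhds hb))).exists
    exact hc.mono fun s hs => hbc.trans_le hs
  · obtain ⟨c, hc, hcb⟩ := (hup.and_eventually (hg.eventually (gt_mem_nhds hb))).exists
    exact hc.mono fun s hs => hs.trans_lt hcb

section Superlevel

variable {ω : ℝ → ℝ} {p K c : ℝ}

theorem eventually_rpow_inv_mem_superlevel (hp : 0 < p) (hc : 0 < c) (hcK : c < K)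
    (hlim : Tendsto (fun θ => ω θ / θ ^ p) (𝓝[>] 0) (𝓝 K)) :
    ∀ᶠ s in 𝓝[>] 0, (s / c) ^ p⁻¹ ∈ {θ | 0 ≤ θ ∧ s ≤ ω θ} := by
  have hθ : Tendsto (fun s => (s / c) ^ p⁻¹) (𝓝[>] 0) (𝓝[>] 0) := by
    refine tendsto_nhdsWithin_iff.2 ⟨?_, ?_⟩
    · have : ContinuousAt (fun s => (s / c) ^ p⁻¹) 0 :=
        (continuousAt_id.div_const c).rpow_const (Or.inr (inv_pos.2 hp).le)
      simpa [Real.zero_rpow (inv_pos.2 hp).ne'] using this.tendsto.mono_left nhdsWithin_le_nhds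
    · filter_upwards [self_mem_nhdsWithin] with s (hs : 0 < s)
      exact Real.rpow_pos_of_pos (div_pos hs hc) _
  filter_upwards [hθ.eventually (hlim.eventually (lt_mem_nhds hcK)),
    hθ.eventually self_mem_nhdsWithin, self_mem_nhdsWithin] with s hlt (hpos : 0 < _) (hs : 0 < s)
  refine ⟨hpos.le, ?_⟩
  rw [lt_div_iff₀ (Real.rpow_pos_of_pos hpos p), Real.rpow_inv_rpow (div_nonneg hs.le hc.le) hp.ne',
    mul_div_cancel₀ _ hc.ne'] at hlt
  exact hlt.le

theorem eventually_rpow_inv_le_sInf_superlevel (hp : 0 < p) (hK : 0 < K) (hω0 : ω 0 ≤ 0)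
    (hlim : Tendsto (fun θ => ω θ / θ ^ p) (𝓝[>] 0) (𝓝 K)) (hKc : K < c) :
    ∀ᶠ s in 𝓝[>] 0, (s / c) ^ p⁻¹ ≤ sInf {θ | 0 ≤ θ ∧ s ≤ ω θ} := by
  have hc : 0 < c := hK.trans hKc
  obtain ⟨θ₁, hθ₁ : 0 < θ₁, hsub⟩ :=
    mem_nhdsGT_iff_exists_Ioo_subset.1 (hlim.eventually (gt_mem_nhds hKc))
  filter_upwards [eventually_rpow_inv_mem_superlevel hp (half_pos hK) (half_lt_self hK) hlim,
    Ioo_mem_nhdsGT (by positivity : (0 : ℝ) < c * θ₁ ^ p)] with s hmem ⟨hs, hsθ₁⟩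
  refine le_csInf ⟨_, hmem⟩ fun θ ⟨hθ, hsθ⟩ => ?_
  rw [Real.rpow_inv_le_iff_of_pos (div_nonneg hs.le hc.le) hθ hp, div_le_iff₀' hc]
  rcases hθ.eq_or_lt with rfl | hθ0
  · linarith
  rcases lt_or_ge θ θ₁ with hθθ₁ | hθ₁θ
  · have := (div_lt_iff₀ (Real.rpow_pos_of_pos hθ0 p)).1 (hsub ⟨hθ0, hθθ₁⟩)
    linarith
  · calc s ≤ c * θ₁ ^ p := hsθ₁.le
      _ ≤ c * θ ^ p := by gcongr

theorem tendsto_sInf_superlevel_div_rpow (hp : 0 < p) (hK : 0 < K) (hω0 : ω 0 ≤ 0)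
    (hlim : Tendsto (fun θ => ω θ / θ ^ p) (𝓝[>] 0) (𝓝 K)) :
    Tendsto (fun s => sInf {θ | 0 ≤ θ ∧ s ≤ ω θ} / s ^ p⁻¹) (𝓝[>] 0) (𝓝 (K ^ (-p⁻¹))) := by
  have hratio : ∀ {s c : ℝ}, 0 < s → 0 < c → (s / c) ^ p⁻¹ / s ^ p⁻¹ = c ^ (-p⁻¹) := by
    intro s c hs hc
    have := (Real.rpow_pos_of_pos hs p⁻¹).ne'
    rw [Real.div_rpow hs.le hc.le, Real.rpow_neg hc.le]
    field_simp
  refine tendsto_of_frequently_eventually_bounds (g := fun c => c ^ (-p⁻¹))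
    (Real.continuousAt_rpow_const _ _ (Or.inl hK.ne')) ?_ ?_
  · refine (eventually_of_mem (Ioo_mem_nhdsLT hK) fun c ⟨hc, hcK⟩ => ?_).frequently.filter_mono
      nhdsWithin_le_nhds
    filter_upwards [eventually_rpow_inv_mem_superlevel hp hc hcK hlim, self_mem_nhdsWithin]
      with s hmem (hs : 0 < s)
    rw [← hratio hs hc]
    gcongr
    exact csInf_le ⟨0, fun θ hθ => hθ.1⟩ hmem
  · refine (eventually_nhdsWithin_of_forall fun c (hKc : c ∈ Ioi K) => ?_).frequently.filter_mono
      nhdsWithin_le_nhds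
    filter_upwards [eventually_rpow_inv_le_sInf_superlevel hp hK hω0 hlim hKc, self_mem_nhdsWithin]
      with s hle (hs : 0 < s)
    rw [← hratio hs (hK.trans hKc)]
    gcongr

end Superlevel

/-- Let `q : ℝ → ℝ` be continuous and positive, `h : ℝ → ℝ` continuous
and strictly increasing, fix `x̄`, and let `S(x) = ∫_{x̄}^{x} (h(σ) − h(x̄))/q(σ) dσ`.
Suppose there are `α > 0` and `C > 0` with `lim_{x → x̄} |h(x) − h(x̄)|/|x − x̄|^α = C`.
For `θ ≥ 0` define `ω(θ) = sup { S(x) : (h(x) − h(x̄))² ≤ θ }`. Then `ω(θ)` is finite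
(i.e. the set is bounded above) for all sufficiently small `θ > 0`,
`lim_{θ → 0⁺} ω(θ)/θ^((α+1)/(2α)) = 1/(q(x̄)(α+1)C^(1/α))`, and the generalized inverse
`Ω(s) = inf { θ ≥ 0 : s ≤ ω(θ) }` satisfies that `lim_{θ → 0⁺} Ω(θ)/θ^β` exists and is
finite, where `β = 2α/(α+1)`. -/
theorem stmt_11 (q h : ℝ → ℝ) (xbar : ℝ)
    (hq_cont : Continuous q) (hq_pos : ∀ x, 0 < q x)
    (hh_cont : Continuous h) (hh_mono : StrictMono h)
    (S : ℝ → ℝ) (hS : ∀ x, S x = ∫ σ in xbar..x, (h σ - h xbar) / q σ)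
    (α C : ℝ) (hα : 0 < α) (hC : 0 < C)
    (hlim : Tendsto (fun x => |h x - h xbar| / |x - xbar| ^ α)
      (nhdsWithin xbar {xbar}ᶜ) (nhds C))
    (ω : ℝ → ℝ)
    (hω : ∀ θ, ω θ = sSup {s : ℝ | ∃ x, (h x - h xbar) ^ 2 ≤ θ ∧ s = S x})
    (Ω : ℝ → ℝ)
    (hΩ : ∀ s, Ω s = sInf {θ : ℝ | 0 ≤ θ ∧ s ≤ ω θ}) :
    (∃ θ₀ > 0, ∀ θ, 0 < θ → θ < θ₀ →
      BddAbove {s : ℝ | ∃ x, (h x - h xbar) ^ 2 ≤ θ ∧ s = S x}) ∧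
    Tendsto (fun θ => ω θ / θ ^ ((α + 1) / (2 * α)))
      (nhdsWithin 0 (Set.Ioi 0)) (nhds (1 / (q xbar * (α + 1) * C ^ (1 / α)))) ∧
    ∃ L : ℝ, Tendsto (fun θ => Ω θ / θ ^ (2 * α / (α + 1)))
      (nhdsWithin 0 (Set.Ioi 0)) (nhds L) := by
  obtain rfl : S = storage q h xbar := funext hS
  obtain rfl : ω = fun θ => sSup {s : ℝ | ∃ x, (h x - h xbar) ^ 2 ≤ θ ∧ s = _} := funext hω
  obtain rfl : Ω = fun s => sInf {θ : ℝ | 0 ≤ θ ∧ s ≤ _} := funext hΩ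
  have hp : 0 < (α + 1) / (2 * α) := by positivity
  have hK : 0 < 1 / (q xbar * (α + 1) * C ^ (1 / α)) := by
    have := hq_pos xbar
    have := Real.rpow_pos_of_pos hC (1 / α)
    positivity
  have hφpos : ∀ x ≠ xbar, 0 < (h x - h xbar) ^ 2 := fun x hx =>
    pow_two_pos_of_ne_zero (sub_ne_zero.2 (hh_mono.injective.ne hx))
  have hloc := (hh_mono.tendsto_sublevel_sq_sub_smallSets xbar).mono_left
    (nhdsWithin_le_nhds (s := Ioi 0))
  have hF := tendsto_storage_div_sq_rpow hq_cont (fun x => (hq_pos x).ne') hh_cont hh_mono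
    hα hC hlim
  have hSa := storage_self q h xbar
  have hωlim := tendsto_sSup_sublevel_div_rpow (by fun_prop) (by simp) hφpos hloc hSa hp.le hF hK.le
  have hω0 := (sSup_sublevel_zero (S := storage q h xbar) (by simp) hφpos).trans hSa
  refine ⟨?_, hωlim, ?_⟩
  · obtain ⟨θ₀, hθ₀, hsub⟩ := mem_nhdsGT_iff_exists_Ioo_subset.1
      (eventually_bddAbove_sublevel hφpos hloc hSa hp.le hF hK.le)
    exact ⟨θ₀, hθ₀, fun θ h0 h1 => hsub ⟨h0, h1⟩⟩
  · rw [show 2 * α / (α + 1) = ((α + 1) / (2 * α))⁻¹ from (inv_div _ _).symm]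
    exact ⟨_, tendsto_sInf_superlevel_div_rpow hp hK hω0.le hωlim⟩
end

section
/- Let n ≥ 1, let ρ₁, …, ρₙ be positive real numbers, and let Ω₁, …, Ωₙ : [0, ∞) → [0, ∞) be continuously differentiable strictly increasing functions such that Ωᵢ(θ) = 0 if and only if θ = 0. Suppose that for each i there exists βᵢ > 0 such that the limit lim_{θ → 0⁺} Ωᵢ(θ)/θ^{βᵢ} exists and is positive. Define Ω⋆ : [0, ∞) → [0, ∞) by Ω⋆(θ) = minᵢ Ωᵢ(θ). Then for every D > 0 there exists a constant C > 0 such that for all θ₁, …, θₙ ∈ [0, D], one has Σ_{i=1}^{n} ρᵢ Ωᵢ(θᵢ) ≥ C · Ω⋆( Σ_{i=1}^{n} θᵢ ). -/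
/-!
Let `j` maximise `θⱼ`, so that `∑ θᵢ ≤ n θⱼ`. The power law at `0` makes `Ωⱼ(θ) / Ωⱼ(nθ)` tend to
`n ^ (-βⱼ) > 0` as `θ → 0⁺`; with continuity and positivity on the rest of `(0, D]` this gives
`c Ωⱼ(nθ) ≤ Ωⱼ(θ)` on `[0, D]` for some `c > 0`. Hence
`Ω⋆(∑ θᵢ) ≤ Ωⱼ(n θⱼ) ≤ Ωⱼ(θⱼ) / c ≤ ∑ ρᵢ Ωᵢ(θᵢ) / (c ρⱼ)`.
-/

open Filter Set Topology

theorem exists_pos_le_of_continuousOn_Ioc_of_tendsto {g : ℝ → ℝ} {a b ℓ : ℝ}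
    (hg : ContinuousOn g (Ioc a b)) (hpos : ∀ x ∈ Ioc a b, 0 < g x) (hℓ : 0 < ℓ)
    (hlim : Tendsto g (𝓝[>] a) (𝓝 ℓ)) :
    ∃ c > 0, ∀ x ∈ Ioc a b, c ≤ g x := by
  obtain ⟨ε, hε, hnear⟩ := mem_nhdsGT_iff_exists_Ioc_subset.mp
    (hlim.eventually (eventually_gt_nhds (half_lt_self hℓ)))
  have hfar : Icc ε b ⊆ Ioc a b := fun x hx => ⟨lt_of_lt_of_le hε hx.1, hx.2⟩
  obtain ⟨c', hc', hc'le⟩ := isCompact_Icc.exists_forall_le' (hg.mono hfar)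
    fun x hx => hpos x (hfar hx)
  refine ⟨min (ℓ / 2) c', lt_min (half_pos hℓ) hc', fun x hx => ?_⟩
  rcases le_or_gt x ε with hxε | hεx
  · exact (min_le_left _ _).trans (hnear ⟨hx.1, hxε⟩).le
  · exact (min_le_right _ _).trans (hc'le x ⟨hεx.le, hx.2⟩)

theorem tendsto_div_comp_const_mul_of_tendsto_div_rpow {f : ℝ → ℝ} {β L m : ℝ}
    (hL : L ≠ 0) (hm : 0 < m)
    (hlim : Tendsto (fun θ => f θ / θ ^ β) (𝓝[>] 0) (𝓝 L)) :
    Tendsto (fun θ => f θ / f (m * θ)) (𝓝[>] 0) (𝓝 (m ^ (-β))) := by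
  have hscale : Tendsto (fun θ : ℝ => m * θ) (𝓝[>] 0) (𝓝[>] 0) := by
    have := tendsto_comap (f := (m * ·)) (x := 𝓝[>] (0 : ℝ))
    rwa [comap_mulLeft_nhdsGT_zero hm] at this
  have hlim_m : Tendsto (fun θ => f (m * θ) / (m * θ) ^ β) (𝓝[>] 0) (𝓝 L) :=
    hlim.comp hscale
  have hquot := (hlim.div hlim_m hL).mul_const (m ^ (-β))
  rw [div_self hL, one_mul] at hquot
  refine hquot.congr' ?_
  filter_upwards [self_mem_nhdsWithin, hlim_m.eventually_ne hL] with θ (hθ : 0 < θ) hne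
  have hfm : f (m * θ) ≠ 0 := fun h => hne (by rw [h, zero_div])
  rw [Pi.div_apply, Real.mul_rpow hm.le hθ.le, Real.rpow_neg hm.le]
  have hmβ := (Real.rpow_pos_of_pos hm β).ne'
  have hθβ := (Real.rpow_pos_of_pos hθ β).ne'
  field_simp

theorem exists_pos_mul_comp_const_mul_le_of_tendsto_div_rpow {f : ℝ → ℝ} {β L m : ℝ}
    (hf : ContinuousOn f (Ici 0)) (hf0 : f 0 = 0) (hpos : ∀ θ, 0 < θ → 0 < f θ)
    (hL : 0 < L) (hm : 0 < m) (hlim : Tendsto (fun θ => f θ / θ ^ β) (𝓝[>] 0) (𝓝 L))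
    (D : ℝ) : ∃ c > 0, ∀ θ ∈ Icc 0 D, c * f (m * θ) ≤ f θ := by
  have hcont : ContinuousOn (fun θ => f θ / f (m * θ)) (Ioc 0 D) :=
    (hf.mono fun θ hθ => hθ.1.le).div
      (hf.comp (continuous_const_mul m).continuousOn fun θ hθ => mul_nonneg hm.le hθ.1.le)
      fun θ hθ => (hpos _ (mul_pos hm hθ.1)).ne'
  obtain ⟨c, hc, hle⟩ := exists_pos_le_of_continuousOn_Ioc_of_tendsto hcont
    (fun θ hθ => div_pos (hpos θ hθ.1) (hpos _ (mul_pos hm hθ.1)))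
    (Real.rpow_pos_of_pos hm (-β)) (tendsto_div_comp_const_mul_of_tendsto_div_rpow hL.ne' hm hlim)
  refine ⟨c, hc, fun θ hθ => ?_⟩
  rcases hθ.1.eq_or_lt with rfl | hθ0
  · simp [hf0]
  · exact (le_div_iff₀ (hpos _ (mul_pos hm hθ0))).mp (hle θ ⟨hθ0, hθ.2⟩)

theorem stmt_12_general (n : ℕ) (hn : 0 < n)
    (ρ : Fin n → ℝ) (hρ : ∀ i, 0 < ρ i)
    (Ω : Fin n → ℝ → ℝ)
    (hΩdiff : ∀ i, ContDiffOn ℝ 1 (Ω i) (Set.Ici 0))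
    (hΩmono : ∀ i, StrictMonoOn (Ω i) (Set.Ici 0))
    (hΩnonneg : ∀ i θ, 0 ≤ θ → 0 ≤ Ω i θ)
    (hΩzero : ∀ i θ, 0 ≤ θ → (Ω i θ = 0 ↔ θ = 0))
    (β : Fin n → ℝ)
    (L : Fin n → ℝ) (hL : ∀ i, 0 < L i)
    (hlim : ∀ i, Tendsto (fun θ : ℝ => Ω i θ / θ ^ β i)
      (nhdsWithin 0 (Set.Ioi 0)) (nhds (L i)))
    (Ωstar : ℝ → ℝ) (hΩstar : ∀ θ, Ωstar θ = ⨅ i, Ω i θ) :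
    ∀ D > 0, ∃ C > 0, ∀ θ : Fin n → ℝ, (∀ i, θ i ∈ Set.Icc 0 D) →
      C * Ωstar (∑ i, θ i) ≤ ∑ i, ρ i * Ω i (θ i) := by
  intro D _
  have : Nonempty (Fin n) := Fin.pos_iff_nonempty.mp hn
  have hΩ0 i : Ω i 0 = 0 := (hΩzero i 0 le_rfl).mpr rfl
  have hΩpos i θ (hθ : 0 < θ) : 0 < Ω i θ :=
    (hΩnonneg i θ hθ.le).lt_of_ne' fun h => hθ.ne' ((hΩzero i θ hθ.le).mp h)
  choose c hc hcΩ using fun i => exists_pos_mul_comp_const_mul_le_of_tendsto_div_rpow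
    (hΩdiff i).continuousOn (hΩ0 i) (hΩpos i) (hL i) (Nat.cast_pos.mpr hn) (hlim i) D
  obtain ⟨i₀, hi₀⟩ := Finite.exists_min ρ
  obtain ⟨j₀, hj₀⟩ := Finite.exists_min c
  refine ⟨ρ i₀ * c j₀, mul_pos (hρ i₀) (hc j₀), fun θ hθ => ?_⟩
  obtain ⟨j, hj⟩ := Finite.exists_max θ
  have hS0 : 0 ≤ ∑ i, θ i := Finset.sum_nonneg fun i _ => (hθ i).1
  have hSle : ∑ i, θ i ≤ n * θ j := by
    simpa using Finset.sum_le_card_nsmul Finset.univ θ (θ j) fun i _ => hj i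
  calc ρ i₀ * c j₀ * Ωstar (∑ i, θ i)
      ≤ ρ i₀ * c j₀ * Ω j (∑ i, θ i) := by
        rw [hΩstar]
        gcongr
        · exact (mul_pos (hρ i₀) (hc j₀)).le
        · exact ciInf_le (finite_range _).bddBelow j
    _ ≤ ρ j * (c j * Ω j (n * θ j)) := by
        rw [← mul_assoc]
        exact mul_le_mul (mul_le_mul (hi₀ j) (hj₀ j) (hc j₀).le (hρ j).le)
          ((hΩmono j).monotoneOn hS0 (hS0.trans hSle) hSle) (hΩnonneg j _ hS0)
          (mul_nonneg (hρ j).le (hc j).le)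
    _ ≤ ρ j * Ω j (θ j) := by gcongr; exacts [(hρ j).le, hcΩ j (θ j) (hθ j)]
    _ ≤ ∑ i, ρ i * Ω i (θ i) :=
        Finset.single_le_sum (fun i _ => mul_nonneg (hρ i).le (hΩnonneg i _ (hθ i).1))
          (Finset.mem_univ j)

/-- Proposition 7 of the paper. Let `ρ₁, …, ρₙ > 0` and let
`Ω₁, …, Ωₙ : [0, ∞) → [0, ∞)` be continuously differentiable strictly increasing
functions with `Ωᵢ(θ) = 0` iff `θ = 0`, each behaving like a power law near `0`
(`lim_{θ→0⁺} Ωᵢ(θ)/θ^{βᵢ}` exists and is positive for some `βᵢ > 0`). Let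
`Ω⋆(θ) = minᵢ Ωᵢ(θ)`. Then for every `D > 0` there is `C > 0` such that for all
`θ₁, …, θₙ ∈ [0, D]`, `∑ ρᵢ Ωᵢ(θᵢ) ≥ C · Ω⋆(∑ θᵢ)`. -/
theorem stmt_12 (n : ℕ) (hn : 0 < n)
    (ρ : Fin n → ℝ) (hρ : ∀ i, 0 < ρ i)
    (Ω : Fin n → ℝ → ℝ)
    (hΩdiff : ∀ i, ContDiffOn ℝ 1 (Ω i) (Set.Ici 0))
    (hΩmono : ∀ i, StrictMonoOn (Ω i) (Set.Ici 0))
    (hΩnonneg : ∀ i θ, 0 ≤ θ → 0 ≤ Ω i θ)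
    (hΩzero : ∀ i θ, 0 ≤ θ → (Ω i θ = 0 ↔ θ = 0))
    (β : Fin n → ℝ) (hβ : ∀ i, 0 < β i)
    (L : Fin n → ℝ) (hL : ∀ i, 0 < L i)
    (hlim : ∀ i, Tendsto (fun θ : ℝ => Ω i θ / θ ^ β i)
      (nhdsWithin 0 (Set.Ioi 0)) (nhds (L i)))
    (Ωstar : ℝ → ℝ) (hΩstar : ∀ θ, Ωstar θ = ⨅ i, Ω i θ) :
    ∀ D > 0, ∃ C > 0, ∀ θ : Fin n → ℝ, (∀ i, θ i ∈ Set.Icc 0 D) →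
      C * Ωstar (∑ i, θ i) ≤ ∑ i, ρ i * Ω i (θ i) :=
  stmt_12_general n hn ρ hρ Ω hΩdiff hΩmono hΩnonneg hΩzero β L hL hlim Ωstar hΩstar
end

section
/- Let Ω⋆ : [0, ∞) → [0, ∞) be a continuous function with Ω⋆(θ) = 0 if and only if θ = 0. Let S̃ : [0, ∞) → [0, ∞) be a nonincreasing function. Let (t_k)_{k ≥ 1} be a strictly increasing sequence of times with t_k → ∞ and liminf_{k → ∞} (t_{k+1} − t_k) > 0, and suppose that for every k the inequality S̃(t_{k+1}) − S̃(t_k) ≤ −Ω⋆(S̃(t_{k+1})) · (t_{k+1} − t_k) holds. Then S̃(t) → 0 as t → ∞. -/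
open Filter Set Topology

/-! Along the sampled times the values `a k = S̃(t k)` decrease to some limit `L ≥ 0`, so the
increments `a (k+1) - a k` tend to `0`. Since the gaps are eventually at least some `δ > 0`, the
dissipation inequality gives `a (k+1) - a k ≤ -Ω⋆(a (k+1)) δ` eventually, and passing to the limit
(by continuity of `Ω⋆`) yields `Ω⋆(L) ≤ 0`, hence `L = 0`. Monotonicity of `S̃` then transfers the
convergence from the samples to all times. -/

theorem eq_zero_of_tendsto_of_sub_le_neg_mul {Ω : ℝ → ℝ} {a g : ℕ → ℝ} {L δ : ℝ}
    (hΩcont : ContinuousOn Ω (Ici 0)) (hΩnonneg : ∀ θ, 0 ≤ θ → 0 ≤ Ω θ)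
    (hΩzero : ∀ θ, 0 ≤ θ → Ω θ = 0 → θ = 0)
    (ha : Tendsto a atTop (𝓝 L)) (ha0 : ∀ k, 0 ≤ a k)
    (hδ : 0 < δ) (hg : ∀ᶠ k in atTop, δ ≤ g k)
    (hstep : ∀ᶠ k in atTop, a (k + 1) - a k ≤ -Ω (a (k + 1)) * g k) :
    L = 0 := by
  have hL0 : 0 ≤ L := ge_of_tendsto' ha ha0
  have ha_succ : Tendsto (fun k => a (k + 1)) atTop (𝓝 L) := ha.comp (tendsto_add_atTop_nat 1)
  have hΩa : Tendsto (fun k => Ω (a (k + 1))) atTop (𝓝 (Ω L)) :=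
    (hΩcont.continuousWithinAt hL0).tendsto.comp
      (tendsto_nhdsWithin_iff.2 ⟨ha_succ, Eventually.of_forall fun k => ha0 (k + 1)⟩)
  have hdiff : Tendsto (fun k => a (k + 1) - a k) atTop (𝓝 0) := by
    simpa using ha_succ.sub ha
  have hstep_δ : ∀ᶠ k in atTop, a (k + 1) - a k ≤ -Ω (a (k + 1)) * δ := by
    filter_upwards [hg, hstep] with k hgk hk
    nlinarith [hΩnonneg _ (ha0 (k + 1))]
  have hΩL : 0 ≤ -Ω L * δ := le_of_tendsto_of_tendsto hdiff (hΩa.neg.mul_const δ) hstep_δ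
  have hΩL_nonpos : Ω L ≤ 0 := by nlinarith
  exact hΩzero L hL0 (le_antisymm hΩL_nonpos (hΩnonneg L hL0))

theorem tendsto_atTop_of_antitoneOn_of_tendsto_comp {ι α β : Type*} [Preorder α] [LinearOrder β]
    [TopologicalSpace β] [OrderTopology β] {l : Filter ι} [l.NeBot]
    {S : α → β} {t : ι → α} {c : α} {b : β}
    (hS : AntitoneOn S (Ici c)) (hSb : ∀ x, c ≤ x → b ≤ S x) (htc : ∀ k, c ≤ t k)
    (h : Tendsto (S ∘ t) l (𝓝 b)) :
    Tendsto S atTop (𝓝 b) := by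
  rw [tendsto_order]
  refine ⟨fun b' hb' => ?_, fun b' hb' => ?_⟩
  · filter_upwards [eventually_ge_atTop c] with x hx using hb'.trans_le (hSb x hx)
  · obtain ⟨k, hk⟩ := (h.eventually (gt_mem_nhds hb')).exists
    filter_upwards [eventually_ge_atTop (t k)] with x hx
    exact (hS (htc k) ((htc k).trans hx) hx).trans_lt hk

theorem stmt_13_general (Ωstar : ℝ → ℝ)
    (hΩcont : ContinuousOn Ωstar (Set.Ici 0))
    (hΩnonneg : ∀ θ, 0 ≤ θ → 0 ≤ Ωstar θ)
    (hΩzero : ∀ θ, 0 ≤ θ → (Ωstar θ = 0 ↔ θ = 0))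
    (S : ℝ → ℝ)
    (hSnonneg : ∀ t, 0 ≤ t → 0 ≤ S t)
    (hSanti : AntitoneOn S (Set.Ici 0))
    (t : ℕ → ℝ) (ht0 : ∀ k, 0 ≤ t k) (htmono : StrictMono t)
    (hgap : 0 < Filter.liminf (fun k => t (k + 1) - t k) atTop)
    (hineq : ∀ k, S (t (k + 1)) - S (t k) ≤ -Ωstar (S (t (k + 1))) * (t (k + 1) - t k)) :
    Tendsto S atTop (nhds 0) := by
  have ha_anti : Antitone (S ∘ t) := fun i j hij => hSanti (ht0 i) (ht0 j) (htmono.monotone hij)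
  have ha0 : ∀ k, 0 ≤ (S ∘ t) k := fun k => hSnonneg _ (ht0 k)
  have ha_lim : Tendsto (S ∘ t) atTop (𝓝 (⨅ k, (S ∘ t) k)) :=
    tendsto_atTop_ciInf ha_anti ⟨0, by rintro _ ⟨k, rfl⟩; exact ha0 k⟩
  obtain ⟨δ, hδ, hδgap⟩ := exists_between hgap
  have hgap_bdd : IsBoundedUnder (· ≥ ·) atTop (fun k => t (k + 1) - t k) :=
    isBoundedUnder_of_eventually_ge
      (Eventually.of_forall fun k => sub_nonneg.2 (htmono k.lt_succ_self).le)
  have hgap_ev : ∀ᶠ k in atTop, δ ≤ t (k + 1) - t k :=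
    (eventually_lt_of_lt_liminf hδgap hgap_bdd).mono fun _ h => h.le
  have hinf : ⨅ k, (S ∘ t) k = 0 :=
    eq_zero_of_tendsto_of_sub_le_neg_mul hΩcont hΩnonneg (fun θ hθ => (hΩzero θ hθ).1) ha_lim
      ha0 hδ hgap_ev (Eventually.of_forall hineq)
  exact tendsto_atTop_of_antitoneOn_of_tendsto_comp hSanti hSnonneg ht0 (hinf ▸ ha_lim)

/-- Proposition 8 of the paper. Let `Ω⋆ : [0, ∞) → [0, ∞)` be
continuous with `Ω⋆(θ) = 0` iff `θ = 0`, and let `S̃ : [0, ∞) → [0, ∞)` be nonincreasing.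
Let `(t_k)` be strictly increasing with `t_k → ∞` and `liminf (t_{k+1} − t_k) > 0`, and
suppose `S̃(t_{k+1}) − S̃(t_k) ≤ −Ω⋆(S̃(t_{k+1}))(t_{k+1} − t_k)` for all `k`. Then
`S̃(t) → 0` as `t → ∞`. -/
theorem stmt_13 (Ωstar : ℝ → ℝ)
    (hΩcont : ContinuousOn Ωstar (Set.Ici 0))
    (hΩnonneg : ∀ θ, 0 ≤ θ → 0 ≤ Ωstar θ)
    (hΩzero : ∀ θ, 0 ≤ θ → (Ωstar θ = 0 ↔ θ = 0))
    (S : ℝ → ℝ)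
    (hSnonneg : ∀ t, 0 ≤ t → 0 ≤ S t)
    (hSanti : AntitoneOn S (Set.Ici 0))
    (t : ℕ → ℝ) (ht0 : ∀ k, 0 ≤ t k) (htmono : StrictMono t)
    (htinf : Tendsto t atTop atTop)
    (hgap : 0 < Filter.liminf (fun k => t (k + 1) - t k) atTop)
    (hineq : ∀ k, S (t (k + 1)) - S (t k) ≤ -Ωstar (S (t (k + 1))) * (t (k + 1) - t k)) :
    Tendsto S atTop (nhds 0) :=
  stmt_13_general Ωstar hΩcont hΩnonneg hΩzero S hSnonneg hSanti t ht0 htmono hgap hineq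
end

section
/- Let M ≥ 0, let (t_k)_{k ≥ 1} be a strictly increasing sequence of times with t_k → ∞, and let (S_k) and (G_k) be sequences of real numbers with S_k ≥ 0 for all k, satisfying for every k the inequality S_{k+1} − S_k ≤ −G_k (t_{k+1} − t_k) + (M/2)(t_{k+1} − t_k)². Then: (i) for every ε > 0 there are infinitely many indices N such that G_N < (M/2)(t_{N+1} − t_N) + ε; and (ii) quantitatively, for every ε > 0 and all indices N₁ ≤ N₂ with t_{N₂} ≥ t_{N₁} + S_{N₁}/ε, there exists k ∈ {N₁, N₁+1, …, N₂} such that G_k < (M/2)(t_{k+1} − t_k) + ε. -/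
/-!
If `G_k ≥ (M/2)(t_{k+1} − t_k) + ε` held for all `k` in a block `N₁, …, N₂`, then multiplying by
`t_{k+1} − t_k > 0` and inserting into the dissipation inequality shows that `S + ε t` does not
increase along the block, so
`0 ≤ S_{N₂+1} ≤ S_{N₁} − ε (t_{N₂+1} − t_{N₁}) < S_{N₁} − ε (t_{N₂} − t_{N₁}) ≤ 0`.
Since `t_k → ∞`, a block long enough for this starts at every index.
-/

open Filter

lemma le_of_forall_mem_Ico_succ_le {α : Type*} [Preorder α] {f : ℕ → α} {a b : ℕ} (hab : a ≤ b)
    (hf : ∀ k ∈ Finset.Ico a b, f (k + 1) ≤ f k) : f b ≤ f a := by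
  induction b, hab using Nat.le_induction with
  | base => exact le_rfl
  | succ n han ih =>
    exact (hf n (Finset.mem_Ico.2 ⟨han, n.lt_succ_self⟩)).trans
      (ih fun k hk ↦ hf k (Finset.Ico_subset_Ico_right n.le_succ hk))

section Dissipation

variable {M ε : ℝ} {t S G : ℕ → ℝ}

lemma add_mul_succ_le_of_le_dissipation {k : ℕ} (ht : t k ≤ t (k + 1))
    (hineq : S (k + 1) - S k ≤ -G k * (t (k + 1) - t k) + (M / 2) * (t (k + 1) - t k) ^ 2)
    (hG : (M / 2) * (t (k + 1) - t k) + ε ≤ G k) :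
    S (k + 1) + ε * t (k + 1) ≤ S k + ε * t k := by
  have := mul_le_mul_of_nonneg_right hG (sub_nonneg.2 ht)
  linarith

lemma exists_dissipation_lt_of_add_div_le (htmono : StrictMono t) (hS : ∀ k, 0 ≤ S k)
    (hineq : ∀ k, S (k + 1) - S k ≤
      -G k * (t (k + 1) - t k) + (M / 2) * (t (k + 1) - t k) ^ 2)
    (hε : 0 < ε) {N₁ N₂ : ℕ} (h12 : N₁ ≤ N₂) (hlen : t N₁ + S N₁ / ε ≤ t N₂) :
    ∃ k, N₁ ≤ k ∧ k ≤ N₂ ∧ G k < (M / 2) * (t (k + 1) - t k) + ε := by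
  by_contra! hbad
  have hdecr : S (N₂ + 1) + ε * t (N₂ + 1) ≤ S N₁ + ε * t N₁ :=
    le_of_forall_mem_Ico_succ_le (f := fun k ↦ S k + ε * t k) (h12.trans N₂.le_succ)
      fun k hk ↦ by
        obtain ⟨hk₁, hk₂⟩ := Finset.mem_Ico.1 hk
        exact add_mul_succ_le_of_le_dissipation (htmono k.lt_succ_self).le (hineq k)
          (hbad k hk₁ (Nat.lt_succ_iff.1 hk₂))
  have hSN₁ : S N₁ ≤ ε * (t N₂ - t N₁) := by
    rw [← div_le_iff₀' hε]
    linarith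
  have hstep : ε * t N₂ < ε * t (N₂ + 1) := mul_lt_mul_of_pos_left (htmono N₂.lt_succ_self) hε
  linarith [hS (N₂ + 1)]

lemma frequently_dissipation_lt (htmono : StrictMono t) (htinf : Tendsto t atTop atTop)
    (hS : ∀ k, 0 ≤ S k)
    (hineq : ∀ k, S (k + 1) - S k ≤
      -G k * (t (k + 1) - t k) + (M / 2) * (t (k + 1) - t k) ^ 2)
    (hε : 0 < ε) : ∃ᶠ N in atTop, G N < (M / 2) * (t (N + 1) - t N) + ε := by
  refine frequently_atTop.2 fun N₀ ↦ ?_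
  obtain ⟨N₂, hN₂⟩ := (htinf.eventually_ge_atTop (t N₀ + S N₀ / ε)).exists_forall_of_atTop
  obtain ⟨k, hk, -, hGk⟩ := exists_dissipation_lt_of_add_div_le htmono hS hineq hε
    (le_max_left N₀ N₂) (hN₂ _ (le_max_right N₀ N₂))
  exact ⟨k, hk, hGk⟩

end Dissipation

theorem stmt_14_general (M : ℝ)
    (t : ℕ → ℝ) (htmono : StrictMono t) (htinf : Tendsto t atTop atTop)
    (S G : ℕ → ℝ) (hS : ∀ k, 0 ≤ S k)
    (hineq : ∀ k, S (k + 1) - S k ≤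
      -G k * (t (k + 1) - t k) + (M / 2) * (t (k + 1) - t k) ^ 2) :
    (∀ ε > (0 : ℝ), ∀ N₀ : ℕ, ∃ N, N₀ ≤ N ∧
      G N < (M / 2) * (t (N + 1) - t N) + ε) ∧
    (∀ ε > (0 : ℝ), ∀ N₁ N₂ : ℕ, N₁ ≤ N₂ → t N₁ + S N₁ / ε ≤ t N₂ →
      ∃ k, N₁ ≤ k ∧ k ≤ N₂ ∧ G k < (M / 2) * (t (k + 1) - t k) + ε) :=
  ⟨fun _ hε ↦ frequently_atTop.1 (frequently_dissipation_lt htmono htinf hS hineq hε),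
    fun _ hε _ _ h12 hlen ↦ exists_dissipation_lt_of_add_div_le htmono hS hineq hε h12 hlen⟩

/-- abstract content of Proposition 6 of the paper. Let `M ≥ 0`, let
`(t_k)` be strictly increasing with `t_k → ∞`, and let `(S_k)`, `(G_k)` be real sequences
with `S_k ≥ 0`, satisfying `S_{k+1} − S_k ≤ −G_k (t_{k+1} − t_k) + (M/2)(t_{k+1} − t_k)²`
for all `k`. Then (i) for every `ε > 0` there are infinitely many `N` with
`G_N < (M/2)(t_{N+1} − t_N) + ε`; and (ii) for every `ε > 0` and all `N₁ ≤ N₂` with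
`t_{N₂} ≥ t_{N₁} + S_{N₁}/ε`, there exists `k ∈ {N₁, …, N₂}` with
`G_k < (M/2)(t_{k+1} − t_k) + ε`. -/
theorem stmt_14 (M : ℝ) (hM : 0 ≤ M)
    (t : ℕ → ℝ) (htmono : StrictMono t) (htinf : Tendsto t atTop atTop)
    (S G : ℕ → ℝ) (hS : ∀ k, 0 ≤ S k)
    (hineq : ∀ k, S (k + 1) - S k ≤
      -G k * (t (k + 1) - t k) + (M / 2) * (t (k + 1) - t k) ^ 2) :
    (∀ ε > (0 : ℝ), ∀ N₀ : ℕ, ∃ N, N₀ ≤ N ∧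
      G N < (M / 2) * (t (N + 1) - t N) + ε) ∧
    (∀ ε > (0 : ℝ), ∀ N₁ N₂ : ℕ, N₁ ≤ N₂ → t N₁ + S N₁ / ε ≤ t N₂ →
      ∃ k, N₁ ≤ k ∧ k ≤ N₂ ∧ G k < (M / 2) * (t (k + 1) - t k) + ε) :=
  stmt_14_general M t htmono htinf S G hS hineq
end
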